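/- arXiv:1801.06205 — 4 statements merged into one kernel-verified Lean document; each statement's English description precedes it below -/
import Mathlib

section
/- An element c of K is group-like (i.e. c ≠ 0 and Δ(c) = c⊗c) if and only if c = 1 or c = a^2. In particular K has exactly two group-like elements. -/
open TensorProduct

noncomputable section

/-- Generators of the algebra `K`. -/
inductive KGen : Type
  | a | b

variable (k : Type) [Field k] (ξ : k)

/-- The defining relations of `K`: `a⁴ = 1`, `b² = 0`, `ba = ξ·ab`. -/
inductive KRel : FreeAlgebra k KGen → FreeAlgebra k KGen → Prop
  | a4 : KRel ((FreeAlgebra.ι k KGen.a) ^ 4) 1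
  | b2 : KRel ((FreeAlgebra.ι k KGen.b) ^ 2) 0
  | ba : KRel (FreeAlgebra.ι k KGen.b * FreeAlgebra.ι k KGen.a)
      (ξ • (FreeAlgebra.ι k KGen.a * FreeAlgebra.ι k KGen.b))

/-- The algebra `K`, the quotient of the free algebra on `a, b` by the relations. -/
abbrev KAlg : Type := RingQuot (KRel k ξ)

/-- The image of the generator `a` in `K`. -/
def aK : KAlg k ξ := RingQuot.mkAlgHom k (KRel k ξ) (FreeAlgebra.ι k KGen.a)

/-- The image of the generator `b` in `K`. -/
def bK : KAlg k ξ := RingQuot.mkAlgHom k (KRel k ξ) (FreeAlgebra.ι k KGen.b)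

/-!
The monomials `a^i b^d` (`i < 4`, `d < 2`) form a basis of `K`: the relations show that they
span, and they are linearly independent because `K` acts on `k^8` by the formulas of left
multiplication in these coordinates. Since `ξ² = -1`, `Δ(a²) = a² ⊗ a²`, and then
`Δ(a^i b) = a^i b ⊗ a^(i+3) + a^(i+1) ⊗ a^i b`, while `Δ(a^i)` is `a^i ⊗ a^i` plus, for odd `i`,
`ξ · a^(i-1) b ⊗ a^(i+1) b`. Hence for `c = ∑ x_(i,d) a^i b^d` the coefficient of
`a^i b ⊗ a^i b` in `Δ c` is `0`, that of `a^(i-1) b ⊗ a^(i+1) b` (`i` odd) is `ξ x_(i,0)`, and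
that of `a^i ⊗ a^j` is `δ_ij x_(i,0)`. Comparing with `c ⊗ c` kills all `x_(i,1)`, then
`x_(1,0)` and `x_(3,0)`, and leaves two orthogonal idempotents `x_(0,0)`, `x_(2,0)` of `k`.
-/

theorem pow_val_natCast_of_pow_eq_one {M : Type*} [Monoid M] {x : M} {n : ℕ} (hx : x ^ n = 1)
    (m : ℕ) : x ^ (m : ZMod n).val = x ^ m := by
  rw [ZMod.val_natCast, ← pow_eq_pow_mod m hx]

theorem zmod_two_cases (d : ZMod 2) : d = 0 ∨ d = 1 := by
  decide +revert

theorem aK_pow_four : aK k ξ ^ 4 = 1 := by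
  simpa [aK] using RingQuot.mkAlgHom_rel k (KRel.a4 (k := k) (ξ := ξ))

theorem bK_mul_bK : bK k ξ * bK k ξ = 0 := by
  simpa [bK, pow_two] using RingQuot.mkAlgHom_rel k (KRel.b2 (k := k) (ξ := ξ))

theorem bK_mul_aK : bK k ξ * aK k ξ = ξ • (aK k ξ * bK k ξ) := by
  simpa [aK, bK] using RingQuot.mkAlgHom_rel k (KRel.ba (k := k) (ξ := ξ))

theorem bK_mul_aK_pow (n : ℕ) : bK k ξ * aK k ξ ^ n = ξ ^ n • (aK k ξ ^ n * bK k ξ) := by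
  induction n with
  | zero => simp
  | succ n ih =>
    rw [pow_succ, ← mul_assoc, ih, smul_mul_assoc, mul_assoc, bK_mul_aK, mul_smul_comm, smul_smul,
      ← mul_assoc, ← pow_succ, pow_succ]

def monoK (p : ZMod 4 × ZMod 2) : KAlg k ξ := aK k ξ ^ p.1.val * bK k ξ ^ p.2.val

theorem monoK_zero (i : ZMod 4) : monoK k ξ (i, 0) = aK k ξ ^ i.val := by
  rw [monoK, ZMod.val_zero, pow_zero, mul_one]

theorem monoK_one (i : ZMod 4) : monoK k ξ (i, 1) = aK k ξ ^ i.val * bK k ξ := by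
  rw [monoK, ZMod.val_one, pow_one]

theorem aK_pow_eq_monoK (n : ℕ) : aK k ξ ^ n = monoK k ξ (n, 0) := by
  rw [monoK_zero, pow_val_natCast_of_pow_eq_one (aK_pow_four k ξ)]

theorem aK_pow_mul_bK_eq_monoK (n : ℕ) : aK k ξ ^ n * bK k ξ = monoK k ξ (n, 1) := by
  rw [monoK_one, pow_val_natCast_of_pow_eq_one (aK_pow_four k ξ)]

theorem one_eq_monoK : (1 : KAlg k ξ) = monoK k ξ (0, 0) := by
  simpa using aK_pow_eq_monoK k ξ 0

theorem aK_sq_eq_monoK : aK k ξ ^ 2 = monoK k ξ (2, 0) := by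
  simpa using aK_pow_eq_monoK k ξ 2

theorem aK_mul_monoK (p : ZMod 4 × ZMod 2) :
    aK k ξ * monoK k ξ p = monoK k ξ (p.1 + 1, p.2) := by
  rw [monoK, monoK, ← mul_assoc, ← pow_succ', ← pow_val_natCast_of_pow_eq_one (aK_pow_four k ξ)]
  push_cast [ZMod.natCast_zmod_val]
  rfl

theorem bK_mul_monoK_zero (i : ZMod 4) :
    bK k ξ * monoK k ξ (i, 0) = ξ ^ i.val • monoK k ξ (i, 1) := by
  rw [monoK_zero, monoK_one, bK_mul_aK_pow]

theorem bK_mul_monoK_one (i : ZMod 4) : bK k ξ * monoK k ξ (i, 1) = 0 := by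
  rw [monoK_one, ← mul_assoc, bK_mul_aK_pow, smul_mul_assoc, mul_assoc, bK_mul_bK, mul_zero,
    smul_zero]

theorem span_range_monoK : Submodule.span k (Set.range (monoK k ξ)) = ⊤ := by
  set M := Submodule.span k (Set.range (monoK k ξ))
  have stable (x : KAlg k ξ) : ∀ m ∈ M, x * m ∈ M := by
    obtain ⟨x, rfl⟩ := RingQuot.mkAlgHom_surjective k (KRel k ξ) x
    induction x using FreeAlgebra.induction with
    | grade0 r => intro m hm; simpa [Algebra.algebraMap_eq_smul_one] using M.smul_mem r hm
    | grade1 g =>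
      suffices M ≤ M.comap (LinearMap.mulLeft k _) from fun m hm => this hm
      refine Submodule.span_le.2 <| Set.range_subset_iff.2 fun ⟨i, d⟩ => ?_
      cases g with
      | a =>
        change aK k ξ * _ ∈ M
        rw [aK_mul_monoK]
        exact Submodule.subset_span ⟨_, rfl⟩
      | b =>
        change bK k ξ * _ ∈ M
        rcases zmod_two_cases d with rfl | rfl
        · rw [bK_mul_monoK_zero]
          exact M.smul_mem _ (Submodule.subset_span ⟨_, rfl⟩)
        · rw [bK_mul_monoK_one]
          exact M.zero_mem
    | mul x y hx hy => intro m hm; rw [map_mul, mul_assoc]; exact hx _ (hy m hm)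
    | add x y hx hy => intro m hm; rw [map_add, add_mul]; exact add_mem (hx m hm) (hy m hm)
  have one_mem : (1 : KAlg k ξ) ∈ M := by
    rw [one_eq_monoK]
    exact Submodule.subset_span ⟨_, rfl⟩
  exact eq_top_iff.2 fun x _ => by simpa using stable x 1 one_mem

abbrev Coeffs := ZMod 4 × ZMod 2 → k

/- Left multiplication by `a` and by `b` in the coordinates of the monomials `a^i b^d`;
the factor `ξ^i` comes from `b a^i = ξ^i a^i b`. -/
def coeffMulA : Module.End k (Coeffs k) where
  toFun f p := f (p.1 - 1, p.2)
  map_add' _ _ := rfl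
  map_smul' _ _ := rfl

def coeffMulB : Module.End k (Coeffs k) where
  toFun f p := if p.2 = 1 then ξ ^ p.1.val * f (p.1, 0) else 0
  map_add' f g := by funext p; split_ifs <;> simp [mul_add, *]
  map_smul' r f := by funext p; split_ifs <;> simp [mul_left_comm, *]

theorem coeffMulA_pow_apply (n : ℕ) (f : Coeffs k) (p : ZMod 4 × ZMod 2) :
    (coeffMulA k ^ n) f p = f (p.1 - n, p.2) := by
  induction n generalizing p with
  | zero => simp
  | succ n ih =>
    rw [pow_succ', Module.End.mul_apply]
    change (coeffMulA k ^ n) f (p.1 - 1, p.2) = _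
    rw [ih, sub_sub, add_comm]
    push_cast
    rfl

theorem coeffMulA_pow_four : coeffMulA k ^ 4 = 1 := by
  refine LinearMap.ext fun f => funext fun p => ?_
  simp [coeffMulA_pow_apply, show (4 : ZMod 4) = 0 from rfl]

theorem coeffMulB_mul_self : coeffMulB k ξ * coeffMulB k ξ = 0 := by
  refine LinearMap.ext fun f => funext fun p => ?_
  simp [coeffMulB]

theorem coeffMulB_mul_coeffMulA (h4 : ξ ^ 4 = 1) :
    coeffMulB k ξ * coeffMulA k = ξ • (coeffMulA k * coeffMulB k ξ) := by
  refine LinearMap.ext fun f => funext fun p => ?_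
  have hval : ξ ^ p.1.val = ξ * ξ ^ (p.1 - 1).val := by
    rw [← pow_succ', ← pow_val_natCast_of_pow_eq_one h4 ((p.1 - 1).val + 1)]
    push_cast [ZMod.natCast_zmod_val]
    rw [sub_add_cancel]
  simp only [Module.End.mul_apply, LinearMap.smul_apply, coeffMulA, coeffMulB, LinearMap.coe_mk,
    AddHom.coe_mk, Pi.smul_apply, smul_eq_mul, hval]
  split_ifs <;> ring

def coeffRep (h4 : ξ ^ 4 = 1) : KAlg k ξ →ₐ[k] Module.End k (Coeffs k) :=
  RingQuot.liftAlgHom k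
    ⟨FreeAlgebra.lift k (fun g => KGen.casesOn g (coeffMulA k) (coeffMulB k ξ)), by
      rintro _ _ ⟨⟩
      · simp [coeffMulA_pow_four]
      · simp [pow_two, coeffMulB_mul_self]
      · simp [coeffMulB_mul_coeffMulA k ξ h4]⟩

theorem coeffRep_aK (h4 : ξ ^ 4 = 1) : coeffRep k ξ h4 (aK k ξ) = coeffMulA k := by
  simp [coeffRep, aK]

theorem coeffRep_bK (h4 : ξ ^ 4 = 1) : coeffRep k ξ h4 (bK k ξ) = coeffMulB k ξ := by
  simp [coeffRep, bK]

theorem coeffRep_monoK_single (h4 : ξ ^ 4 = 1) (p : ZMod 4 × ZMod 2) :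
    coeffRep k ξ h4 (monoK k ξ p) (Pi.single 0 1) = Pi.single p 1 := by
  obtain ⟨i, d⟩ := p
  funext q
  rcases zmod_two_cases d with rfl | rfl
  · rw [monoK_zero, map_pow, coeffRep_aK, coeffMulA_pow_apply]
    simp [Pi.single_apply, Prod.ext_iff, sub_eq_zero]
  · rw [monoK_one, map_mul, map_pow, coeffRep_aK, coeffRep_bK, Module.End.mul_apply,
      coeffMulA_pow_apply]
    simp only [coeffMulB, LinearMap.coe_mk, AddHom.coe_mk, Pi.single_apply, Prod.ext_iff]
    split_ifs <;> simp_all [sub_eq_zero]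

theorem linearIndependent_monoK (h4 : ξ ^ 4 = 1) : LinearIndependent k (monoK k ξ) := by
  refine LinearIndependent.of_comp
    ((LinearMap.applyₗ (Pi.single 0 1)).comp (coeffRep k ξ h4).toLinearMap) ?_
  convert (Pi.basisFun k (ZMod 4 × ZMod 2)).linearIndependent using 1
  funext p
  simp [coeffRep_monoK_single]

def monoBasis (h4 : ξ ^ 4 = 1) : Module.Basis (ZMod 4 × ZMod 2) k (KAlg k ξ) :=
  Module.Basis.mk (linearIndependent_monoK k ξ h4) (span_range_monoK k ξ).ge

theorem monoBasis_apply (h4 : ξ ^ 4 = 1) (p : ZMod 4 × ZMod 2) :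
    monoBasis k ξ h4 p = monoK k ξ p :=
  Module.Basis.mk_apply ..

section Comul

variable {k ξ} (Δ : KAlg k ξ →ₐ[k] KAlg k ξ ⊗[k] KAlg k ξ)

theorem comul_aK_eq
    (h : Δ (aK k ξ) = aK k ξ ⊗ₜ aK k ξ + ξ⁻¹ • (bK k ξ ⊗ₜ (bK k ξ * aK k ξ ^ 2))) :
    Δ (aK k ξ) = aK k ξ ⊗ₜ aK k ξ + ξ • (bK k ξ ⊗ₜ (aK k ξ ^ 2 * bK k ξ)) := by
  rw [h, bK_mul_aK_pow, tmul_smul, smul_smul, pow_two, ← mul_assoc, inv_mul_mul_self]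

variable (hξ2 : ξ ^ 2 = -1)
  (hΔa : Δ (aK k ξ) = aK k ξ ⊗ₜ aK k ξ + ξ • (bK k ξ ⊗ₜ (aK k ξ ^ 2 * bK k ξ)))
  (hΔb : Δ (bK k ξ) = bK k ξ ⊗ₜ (aK k ξ ^ 3) + aK k ξ ⊗ₜ bK k ξ)

include hΔa hΔb in
theorem comul_aK_mul_bK :
    Δ (aK k ξ * bK k ξ) =
      (aK k ξ * bK k ξ) ⊗ₜ (aK k ξ ^ 4) + (aK k ξ ^ 2) ⊗ₜ (aK k ξ * bK k ξ) := by
  have hbab : aK k ξ ^ 2 * bK k ξ * bK k ξ = 0 := by rw [mul_assoc, bK_mul_bK, mul_zero]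
  rw [map_mul, hΔa, hΔb]
  simp only [add_mul, mul_add, smul_mul_assoc, Algebra.TensorProduct.tmul_mul_tmul, bK_mul_bK,
    hbab, zero_tmul, tmul_zero, smul_zero, add_zero]
  rw [← pow_two, ← pow_succ']

include hξ2 hΔa

theorem comul_aK_sq : Δ (aK k ξ ^ 2) = (aK k ξ ^ 2) ⊗ₜ (aK k ξ ^ 2) := by
  have hba : bK k ξ * aK k ξ = ξ • (aK k ξ * bK k ξ) := bK_mul_aK k ξ
  have hbab : aK k ξ ^ 2 * bK k ξ * aK k ξ = ξ • (aK k ξ ^ 3 * bK k ξ) := by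
    rw [mul_assoc, hba, mul_smul_comm, ← mul_assoc, ← pow_succ]
  rw [map_pow, hΔa, pow_two]
  simp only [add_mul, mul_add, smul_mul_assoc, mul_smul_comm,
    Algebra.TensorProduct.tmul_mul_tmul, hba, hbab, bK_mul_bK, zero_tmul, smul_zero, add_zero,
    ← smul_tmul', tmul_smul, smul_smul]
  rw [← mul_assoc (aK k ξ), ← pow_succ', ← pow_two, add_assoc, ← add_smul,
    show ξ * (ξ * ξ) + ξ = 0 by linear_combination ξ * hξ2, zero_smul, add_zero]

theorem comul_aK_pow_of_even {n : ℕ} (hn : Even n) :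
    Δ (aK k ξ ^ n) = (aK k ξ ^ n) ⊗ₜ (aK k ξ ^ n) := by
  obtain ⟨m, rfl⟩ := hn
  rw [← two_mul, pow_mul, map_pow, comul_aK_sq Δ hξ2 hΔa, Algebra.TensorProduct.tmul_pow]

theorem comul_aK_pow_of_odd {n : ℕ} (hn : Odd n) :
    Δ (aK k ξ ^ n) = (aK k ξ ^ n) ⊗ₜ (aK k ξ ^ n) +
      ξ • ((aK k ξ ^ (n - 1) * bK k ξ) ⊗ₜ (aK k ξ ^ (n + 1) * bK k ξ)) := by
  obtain ⟨m, rfl⟩ := hn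
  rw [pow_succ, map_mul, comul_aK_pow_of_even Δ hξ2 hΔa (even_two_mul m), hΔa, Nat.add_sub_cancel]
  simp only [mul_add, mul_smul_comm, Algebra.TensorProduct.tmul_mul_tmul, ← mul_assoc, ← pow_add]

include hΔb in
theorem comul_aK_pow_mul_bK (n : ℕ) :
    Δ (aK k ξ ^ n * bK k ξ) =
      (aK k ξ ^ n * bK k ξ) ⊗ₜ (aK k ξ ^ (n + 3)) + (aK k ξ ^ (n + 1)) ⊗ₜ (aK k ξ ^ n * bK k ξ) := by
  obtain ⟨m, rfl | rfl⟩ := Nat.even_or_odd' n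
  · rw [map_mul, comul_aK_pow_of_even Δ hξ2 hΔa (even_two_mul m), hΔb]
    simp only [mul_add, Algebra.TensorProduct.tmul_mul_tmul, ← pow_succ, pow_add]
  · rw [pow_succ, mul_assoc, map_mul, comul_aK_pow_of_even Δ hξ2 hΔa (even_two_mul m),
      comul_aK_mul_bK Δ hΔa hΔb]
    simp only [mul_add, Algebra.TensorProduct.tmul_mul_tmul, ← mul_assoc, ← pow_add, ← pow_succ]

theorem comul_monoK_of_even {i : ZMod 4} (hi : Even i.val) :
    Δ (monoK k ξ (i, 0)) = monoK k ξ (i, 0) ⊗ₜ monoK k ξ (i, 0) := by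
  rw [monoK_zero, comul_aK_pow_of_even Δ hξ2 hΔa hi]

theorem comul_monoK_of_odd {i : ZMod 4} (hi : Odd i.val) :
    Δ (monoK k ξ (i, 0)) = monoK k ξ (i, 0) ⊗ₜ monoK k ξ (i, 0) +
      ξ • (monoK k ξ (i - 1, 1) ⊗ₜ monoK k ξ (i + 1, 1)) := by
  have h1 : ((i.val - 1 : ℕ) : ZMod 4) = i - 1 := by
    rw [Nat.cast_sub hi.pos, ZMod.natCast_zmod_val, Nat.cast_one]
  rw [monoK_zero, comul_aK_pow_of_odd Δ hξ2 hΔa hi, aK_pow_mul_bK_eq_monoK,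
    aK_pow_mul_bK_eq_monoK, h1]
  push_cast [ZMod.natCast_zmod_val]
  rfl

include hΔb in
theorem comul_monoK_one (i : ZMod 4) :
    Δ (monoK k ξ (i, 1)) = monoK k ξ (i, 1) ⊗ₜ monoK k ξ (i + 3, 0) +
      monoK k ξ (i + 1, 0) ⊗ₜ monoK k ξ (i, 1) := by
  rw [monoK_one, comul_aK_pow_mul_bK Δ hξ2 hΔa hΔb, aK_pow_mul_bK_eq_monoK, aK_pow_eq_monoK,
    aK_pow_eq_monoK]
  push_cast [ZMod.natCast_zmod_val]
  rfl

omit hξ2 hΔa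

variable (B : Module.Basis (ZMod 4 × ZMod 2) k (KAlg k ξ))

/-- The convolution product `e_p * e_q` of two functionals of the dual basis of `B`. -/
def comulCoord (p q : ZMod 4 × ZMod 2) : KAlg k ξ →ₗ[k] k :=
  (B.tensorProduct B).coord (p, q) ∘ₗ Δ.toLinearMap

theorem comulCoord_apply_of_comul_eq_tmul {c : KAlg k ξ} (hc : Δ c = c ⊗ₜ c)
    (p q : ZMod 4 × ZMod 2) : comulCoord Δ B p q c = B.repr c p * B.repr c q := by
  simp [comulCoord, hc, mul_comm]

variable (hB : ⇑B = monoK k ξ)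
include hB

theorem repr_monoK (p : ZMod 4 × ZMod 2) : B.repr (monoK k ξ p) = Finsupp.single p 1 := by
  rw [← hB, B.repr_self]

theorem repr_monoK_tmul_monoK (p q r s : ZMod 4 × ZMod 2) :
    (B.tensorProduct B).repr (monoK k ξ p ⊗ₜ monoK k ξ q) (r, s) =
      if p = r ∧ q = s then 1 else 0 := by
  rw [Module.Basis.tensorProduct_repr_tmul_apply, repr_monoK B hB, repr_monoK B hB,
    Finsupp.single_apply, Finsupp.single_apply]
  split_ifs <;> simp_all

include hξ2 hΔa

theorem comulCoord_monoK_zero (j : ZMod 4) (p q : ZMod 4 × ZMod 2) :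
    comulCoord Δ B p q (monoK k ξ (j, 0)) =
      (if (j, 0) = p ∧ (j, 0) = q then 1 else 0) +
        if Odd j.val ∧ (j - 1, 1) = p ∧ (j + 1, 1) = q then ξ else 0 := by
  rcases Nat.even_or_odd j.val with hj | hj
  · simp [comulCoord, comul_monoK_of_even Δ hξ2 hΔa hj, repr_monoK_tmul_monoK B hB,
      Nat.not_odd_iff_even.mpr hj]
  · simp [comulCoord, comul_monoK_of_odd Δ hξ2 hΔa hj, repr_monoK_tmul_monoK B hB, hj]

include hΔb

theorem comulCoord_monoK_one (j : ZMod 4) (p q : ZMod 4 × ZMod 2) :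
    comulCoord Δ B p q (monoK k ξ (j, 1)) =
      (if (j, 1) = p ∧ (j + 3, 0) = q then 1 else 0) +
        if (j + 1, 0) = p ∧ (j, 1) = q then 1 else 0 := by
  simp [comulCoord, comul_monoK_one Δ hξ2 hΔa hΔb, repr_monoK_tmul_monoK B hB]

theorem comulCoord_b_b (i : ZMod 4) : comulCoord Δ B (i, 1) (i, 1) = 0 := by
  refine B.ext fun ⟨j, d⟩ => ?_
  rw [hB]
  rcases zmod_two_cases d with rfl | rfl
  · rw [comulCoord_monoK_zero Δ hξ2 hΔa B hB]
    have hj : j + 1 ≠ j - 1 := by decide +revert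
    by_cases h : j - 1 = i
    · simp [← h, hj]
    · simp [h]
  · simp [comulCoord_monoK_one Δ hξ2 hΔa hΔb B hB]

theorem comulCoord_sub_one_add_one {i : ZMod 4} (hi : Odd i.val) :
    comulCoord Δ B (i - 1, 1) (i + 1, 1) = ξ • B.coord (i, 0) := by
  refine B.ext fun ⟨j, d⟩ => ?_
  rw [hB]
  rcases zmod_two_cases d with rfl | rfl
  · rw [comulCoord_monoK_zero Δ hξ2 hΔa B hB]
    by_cases h : j = i
    · simp [h, hi, repr_monoK B hB]
    · simp [h, repr_monoK B hB, Ne.symm h]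
  · simp [comulCoord_monoK_one Δ hξ2 hΔa hΔb B hB, repr_monoK B hB]

theorem comulCoord_a_a (i i' : ZMod 4) :
    comulCoord Δ B (i, 0) (i', 0) = if i = i' then B.coord (i, 0) else 0 := by
  refine B.ext fun ⟨j, d⟩ => ?_
  rw [hB]
  rcases zmod_two_cases d with rfl | rfl
  · rw [comulCoord_monoK_zero Δ hξ2 hΔa B hB]
    by_cases h : i = i'
    · simp [h, repr_monoK B hB, Finsupp.single_apply, eq_comm]
    · simp only [h, Prod.mk.injEq, and_true, one_ne_zero, and_false, and_self,
        ↓reduceIte, add_zero, LinearMap.zero_apply, ite_eq_right_iff, imp_false, not_and]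
      rintro rfl rfl
      exact h rfl
  · split_ifs <;> simp [comulCoord_monoK_one Δ hξ2 hΔa hΔb B hB, repr_monoK B hB]

theorem exists_eq_smul_one_add_smul_aK_sq_of_comul_eq {c : KAlg k ξ} (hc : Δ c = c ⊗ₜ c) :
    ∃ x y : k, c = x • 1 + y • aK k ξ ^ 2 ∧ IsIdempotentElem x ∧ IsIdempotentElem y ∧
      x * y = 0 := by
  have hcoord := comulCoord_apply_of_comul_eq_tmul Δ B hc
  have hξ : ξ ≠ 0 := by rintro rfl; norm_num at hξ2
  have hb (i : ZMod 4) : B.repr c (i, 1) = 0 := by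
    have := hcoord (i, 1) (i, 1)
    rw [comulCoord_b_b Δ hξ2 hΔa hΔb B hB] at this
    exact mul_self_eq_zero.mp this.symm
  have ha_odd {i : ZMod 4} (hi : Odd i.val) : B.repr c (i, 0) = 0 := by
    have := hcoord (i - 1, 1) (i + 1, 1)
    rw [comulCoord_sub_one_add_one Δ hξ2 hΔa hΔb B hB hi, hb, zero_mul] at this
    simpa [hξ] using this
  have haa (i i' : ZMod 4) :
      B.repr c (i, 0) * B.repr c (i', 0) = if i = i' then B.repr c (i, 0) else 0 := by
    rw [← hcoord, comulCoord_a_a Δ hξ2 hΔa hΔb B hB]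
    split_ifs <;> rfl
  refine ⟨B.repr c (0, 0), B.repr c (2, 0), ?_, haa 0 0, haa 2 2, haa 0 2⟩
  conv_lhs => rw [← B.sum_repr c]
  rw [Fintype.sum_eq_add (0, 0) (2, 0) (by decide), hB, one_eq_monoK, aK_sq_eq_monoK]
  rintro ⟨i, d⟩ ⟨h0, h2⟩
  rcases zmod_two_cases d with rfl | rfl
  · have hi : Odd i.val := by revert i; decide
    simp [ha_odd hi]
  · simp [hb]

end Comul

theorem stmt_2_general (k : Type) [Field k] (ξ : k)
    (hξ : IsPrimitiveRoot ξ 4)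
    (Δ : KAlg k ξ →ₐ[k] KAlg k ξ ⊗[k] KAlg k ξ)
    (hΔa : Δ (aK k ξ) = aK k ξ ⊗ₜ aK k ξ + ξ⁻¹ • (bK k ξ ⊗ₜ (bK k ξ * aK k ξ ^ 2)))
    (hΔb : Δ (bK k ξ) = bK k ξ ⊗ₜ (aK k ξ ^ 3) + aK k ξ ⊗ₜ bK k ξ) :
    (∀ c : KAlg k ξ, (c ≠ 0 ∧ Δ c = c ⊗ₜ c) ↔ (c = 1 ∨ c = aK k ξ ^ 2)) ∧
    Set.ncard {c : KAlg k ξ | c ≠ 0 ∧ Δ c = c ⊗ₜ c} = 2 := by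
  have hξ2 : ξ ^ 2 = -1 := (hξ.pow (by norm_num) (by norm_num : 4 = 2 * 2)).eq_neg_one_of_two_right
  have hΔa' := comul_aK_eq Δ hΔa
  set B := monoBasis k ξ hξ.pow_eq_one
  have hB : ⇑B = monoK k ξ := funext (monoBasis_apply k ξ _)
  have h1 : B (0, 0) = 1 := by rw [hB, one_eq_monoK]
  have ha2 : B (2, 0) = aK k ξ ^ 2 := by rw [hB, aK_sq_eq_monoK]
  have key (c : KAlg k ξ) : (c ≠ 0 ∧ Δ c = c ⊗ₜ c) ↔ (c = 1 ∨ c = aK k ξ ^ 2) := by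
    constructor
    · rintro ⟨hc0, hc⟩
      obtain ⟨x, y, rfl, hx, hy, hxy⟩ :=
        exists_eq_smul_one_add_smul_aK_sq_of_comul_eq Δ hξ2 hΔa' hΔb B hB hc
      rw [IsIdempotentElem.iff_eq_zero_or_one] at hx hy
      rcases hx with rfl | rfl <;> rcases hy with rfl | rfl <;> simp_all
    · rintro (rfl | rfl)
      · exact ⟨h1 ▸ B.ne_zero _, by rw [map_one, Algebra.TensorProduct.one_def]⟩
      · exact ⟨ha2 ▸ B.ne_zero _, comul_aK_sq Δ hξ2 hΔa'⟩
  refine ⟨key, ?_⟩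
  rw [show {c | c ≠ 0 ∧ Δ c = c ⊗ₜ c} = {1, aK k ξ ^ 2} from Set.ext key,
    Set.ncard_pair (h1 ▸ ha2 ▸ B.injective.ne (by decide))]

/-- An element `c` of `K` is group-like (`c ≠ 0` and `Δ(c) = c ⊗ c`) if and only if
`c = 1` or `c = a²`; in particular `K` has exactly two group-like elements. Here `Δ`
is the comultiplication of `K`, i.e. the algebra map determined by
`Δ(a) = a⊗a + ξ⁻¹·b⊗ba²` and `Δ(b) = b⊗a³ + a⊗b`. -/
theorem stmt_2 (k : Type) [Field k] [IsAlgClosed k] [CharZero k] (ξ : k)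
    (hξ : IsPrimitiveRoot ξ 4)
    (Δ : KAlg k ξ →ₐ[k] KAlg k ξ ⊗[k] KAlg k ξ)
    (hΔa : Δ (aK k ξ) = aK k ξ ⊗ₜ aK k ξ + ξ⁻¹ • (bK k ξ ⊗ₜ (bK k ξ * aK k ξ ^ 2)))
    (hΔb : Δ (bK k ξ) = bK k ξ ⊗ₜ (aK k ξ ^ 3) + aK k ξ ⊗ₜ bK k ξ) :
    (∀ c : KAlg k ξ, (c ≠ 0 ∧ Δ c = c ⊗ₜ c) ↔ (c = 1 ∨ c = aK k ξ ^ 2)) ∧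
    Set.ncard {c : KAlg k ξ | c ≠ 0 ∧ Δ c = c ⊗ₜ c} = 2 :=
  stmt_2_general k ξ hξ Δ hΔa hΔb

end
end

section
/- The space P_{1,a^2}(K) = {c ∈ K : Δ(c) = c⊗1 + a^2⊗c} of (1, a^2)-skew-primitive elements of K equals the two-dimensional linear span of 1 − a^2 and ba. -/
open TensorProduct

noncomputable section

variable (k : Type) [Field k] (ξ : k)

/-
The monomials `b^j a^i` (`j < 2`, `i < 4`) form a basis of `K`: they span by the relations, and
they are linearly independent because they act independently on `k^(2×4)` through the left
regular representation. Let `φ` and `ψ` be the coordinates of `1` and of `ba` in this basis.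
From `Δ(b a^i) = b a^i ⊗ a^(i+3) + a^(i+1) ⊗ b a^i` and `Δ(a^i) ∈ a^i ⊗ a^i + K ⊗ b a^(i+1)`
one reads off `(id ⊗ φ) (Δ c) = φ(c) 1 + ψ(c) ba` for every `c`. If `Δ c = c ⊗ 1 + a² ⊗ c`, the
right-hand side gives `(id ⊗ φ) (Δ c) = c + φ(c) a²`, hence `c = φ(c) (1 - a²) + ψ(c) ba`.
Conversely `ba` and `1 - a²` are `(1, a²)`-skew-primitive; for the latter this is
`Δ(a²) = a² ⊗ a²`, where `ξ² = -1` is used.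
-/

section SkewPrimitives

variable {R A : Type*} [CommRing R] [AddCommGroup A] [Module R A]

def skewPrimitives (Δ : A →ₗ[R] A ⊗[R] A) (g h : A) : Submodule R A :=
  LinearMap.ker (Δ - (TensorProduct.mk R A A).flip g - TensorProduct.mk R A A h)

theorem mem_skewPrimitives {Δ : A →ₗ[R] A ⊗[R] A} {g h c : A} :
    c ∈ skewPrimitives Δ g h ↔ Δ c = c ⊗ₜ g + h ⊗ₜ c := by
  simp [skewPrimitives, sub_sub, sub_eq_zero]

end SkewPrimitives

namespace KAlg

theorem aK_pow_four : aK k ξ ^ 4 = 1 := by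
  simpa [aK] using RingQuot.mkAlgHom_rel k (KRel.a4 (k := k) (ξ := ξ))

theorem bK_sq : bK k ξ ^ 2 = 0 := by
  simpa [bK] using RingQuot.mkAlgHom_rel k (KRel.b2 (k := k) (ξ := ξ))

theorem bK_mul_aK : bK k ξ * aK k ξ = ξ • (aK k ξ * bK k ξ) := by
  simpa [aK, bK] using RingQuot.mkAlgHom_rel k (KRel.ba (k := k) (ξ := ξ))

variable {k ξ}

theorem aK_pow_mod (n : ℕ) : aK k ξ ^ (n % 4) = aK k ξ ^ n := by
  conv_rhs => rw [← Nat.mod_add_div n 4, pow_add, pow_mul, aK_pow_four, one_pow, mul_one]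

theorem bK_mul_aK_pow (n : ℕ) : bK k ξ * aK k ξ ^ n = ξ ^ n • (aK k ξ ^ n * bK k ξ) := by
  induction n with
  | zero => simp
  | succ n ih =>
    rw [pow_succ, ← mul_assoc, ih, smul_mul_assoc, mul_assoc, bK_mul_aK, mul_smul_comm, smul_smul,
      ← pow_succ, ← mul_assoc, ← pow_succ]

theorem bK_mul_aK_pow_mul_bK (n : ℕ) : bK k ξ * aK k ξ ^ n * bK k ξ = 0 := by
  rw [bK_mul_aK_pow, smul_mul_assoc, mul_assoc, ← sq, bK_sq, mul_zero, smul_zero]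

theorem aK_pow_mul_bK (hξ : ξ ^ 4 = 1) (n : ℕ) :
    aK k ξ ^ n * bK k ξ = ξ ^ (3 * n) • (bK k ξ * aK k ξ ^ n) := by
  rw [bK_mul_aK_pow, smul_smul, ← pow_add, show 3 * n + n = 4 * n by ring, pow_mul, hξ, one_pow,
    one_smul]

theorem aK_pow_fin_add (i j : Fin 4) :
    aK k ξ ^ ((i + j : Fin 4) : ℕ) = aK k ξ ^ ((i : ℕ) + j) := by
  rw [Fin.val_add, aK_pow_mod]

variable (k ξ) in
def monomial (p : Fin 2 × Fin 4) : KAlg k ξ := bK k ξ ^ (p.1 : ℕ) * aK k ξ ^ (p.2 : ℕ)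

theorem monomial_zero (i : Fin 4) : monomial k ξ (0, i) = aK k ξ ^ (i : ℕ) := by
  simp [monomial]

theorem monomial_one (i : Fin 4) : monomial k ξ (1, i) = bK k ξ * aK k ξ ^ (i : ℕ) := by
  simp [monomial]

theorem aK_mul_monomial_zero (i : Fin 4) :
    aK k ξ * monomial k ξ (0, i) = monomial k ξ (0, i + 1) := by
  rw [monomial_zero, monomial_zero, aK_pow_fin_add, Fin.val_one, pow_succ']

theorem aK_mul_monomial_one (hξ : ξ ^ 4 = 1) (i : Fin 4) :
    aK k ξ * monomial k ξ (1, i) = ξ ^ 3 • monomial k ξ (1, i + 1) := by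
  rw [monomial_one, monomial_one, aK_pow_fin_add, Fin.val_one, pow_succ' (aK k ξ), ← mul_assoc,
    ← mul_assoc, ← pow_one (aK k ξ), aK_pow_mul_bK hξ, pow_one, smul_mul_assoc, mul_assoc]

theorem bK_mul_monomial_zero (i : Fin 4) :
    bK k ξ * monomial k ξ (0, i) = monomial k ξ (1, i) := by
  rw [monomial_zero, monomial_one]

theorem bK_mul_monomial_one (i : Fin 4) : bK k ξ * monomial k ξ (1, i) = 0 := by
  rw [monomial_one, ← mul_assoc, ← sq, bK_sq, zero_mul]

section Spanning

local notation "S" => Submodule.span k (Set.range (monomial k ξ))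

theorem mul_mem_span_monomial {y x : KAlg k ξ} (hy : ∀ p, y * monomial k ξ p ∈ S) (hx : x ∈ S) :
    y * x ∈ S := by
  induction hx using Submodule.span_induction with
  | mem x hx => obtain ⟨p, rfl⟩ := hx; exact hy p
  | zero => simp
  | add x z _ _ hx hz => rw [mul_add]; exact add_mem hx hz
  | smul c x _ hx => rw [mul_smul_comm]; exact Submodule.smul_mem _ c hx

theorem span_monomial (hξ : ξ ^ 4 = 1) : S = ⊤ := by
  have hmem (p) : monomial k ξ p ∈ S := Submodule.subset_span ⟨p, rfl⟩
  suffices h : ∀ y, ∀ x ∈ S, y * x ∈ S by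
    refine eq_top_iff.mpr fun y _ => ?_
    simpa [monomial] using h y _ (hmem 0)
  intro y
  obtain ⟨y, rfl⟩ := RingQuot.mkAlgHom_surjective k (KRel k ξ) y
  induction y using FreeAlgebra.induction with
  | grade0 r =>
    intro x hx
    rw [AlgHom.commutes, ← Algebra.smul_def]
    exact Submodule.smul_mem _ r hx
  | grade1 g =>
    refine fun x => mul_mem_span_monomial <| Prod.forall.mpr <|
      Fin.forall_fin_two.mpr ⟨fun i => ?_, fun i => ?_⟩
    all_goals cases g
    · exact (aK_mul_monomial_zero (k := k) (ξ := ξ) i).symm ▸ hmem _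
    · exact (bK_mul_monomial_zero (k := k) (ξ := ξ) i).symm ▸ hmem _
    · exact (aK_mul_monomial_one hξ i).symm ▸ Submodule.smul_mem _ _ (hmem _)
    · exact (bK_mul_monomial_one (k := k) (ξ := ξ) i).symm ▸ zero_mem _
  | mul y z hy hz => intro x hx; rw [map_mul, mul_assoc]; exact hy _ (hz x hx)
  | add y z hy hz => intro x hx; rw [map_add, add_mul]; exact add_mem (hy x hx) (hz x hx)

end Spanning

section RegularRepresentation

-- Left multiplication by `a` and `b` in the coordinates of the monomials `b^j a^i`:
-- `a * b^j a^i = ξ^(3j) b^j a^(i+1)`, `b * a^i = b a^i` and `b * b a^i = 0`.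
variable (k ξ) in
def regA : Module.End k (Fin 2 × Fin 4 → k) :=
  LinearMap.pi fun p => ξ ^ (3 * (p.1 : ℕ)) • LinearMap.proj (p.1, p.2 - 1)

variable (k) in
def regB : Module.End k (Fin 2 × Fin 4 → k) :=
  LinearMap.pi fun p => ((p.1 : ℕ) : k) • LinearMap.proj (0, p.2)

theorem regA_apply (f : Fin 2 × Fin 4 → k) (p : Fin 2 × Fin 4) :
    regA k ξ f p = ξ ^ (3 * (p.1 : ℕ)) * f (p.1, p.2 - 1) := rfl

theorem regB_apply (f : Fin 2 × Fin 4 → k) (p : Fin 2 × Fin 4) :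
    regB k f p = (p.1 : ℕ) * f (0, p.2) := rfl

theorem regA_pow_four (hξ : ξ ^ 4 = 1) : regA k ξ ^ 4 = 1 := by
  refine LinearMap.ext fun f => funext fun ⟨j, i⟩ => ?_
  have hi : i - 1 - 1 - 1 - 1 = i := by revert i; decide
  have hw : (ξ ^ (3 * (j : ℕ))) ^ 4 = 1 := by rw [← pow_mul, mul_comm, pow_mul, hξ, one_pow]
  simp only [pow_succ, pow_zero, one_mul, Module.End.mul_apply, regA_apply, hi,
    Module.End.one_apply]
  linear_combination f (j, i) * hw

theorem regB_sq : regB k ^ 2 = 0 := by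
  refine LinearMap.ext fun f => funext fun ⟨j, i⟩ => ?_
  simp [sq, regB_apply]

theorem regB_mul_regA (hξ : ξ ^ 4 = 1) : regB k * regA k ξ = ξ • (regA k ξ * regB k) := by
  refine LinearMap.ext fun f => funext fun ⟨j, i⟩ => ?_
  fin_cases j <;> simp [regB_apply, regA_apply]
  linear_combination -f (0, i - 1) * hξ

variable (k ξ) in
def regularRep (hξ : ξ ^ 4 = 1) : KAlg k ξ →ₐ[k] Module.End k (Fin 2 × Fin 4 → k) :=
  RingQuot.liftAlgHom k ⟨FreeAlgebra.lift k (KGen.rec (regA k ξ) (regB k)), fun _ _ h => by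
    cases h <;> simp [regA_pow_four hξ, regB_sq, regB_mul_regA hξ]⟩

theorem regularRep_aK (hξ : ξ ^ 4 = 1) : regularRep k ξ hξ (aK k ξ) = regA k ξ := by
  simp [regularRep, aK]

theorem regularRep_bK (hξ : ξ ^ 4 = 1) : regularRep k ξ hξ (bK k ξ) = regB k := by
  simp [regularRep, bK]

theorem regA_single_zero (i : Fin 4) :
    regA k ξ (Pi.single (0, i) 1) = Pi.single (0, i + 1) 1 := by
  refine funext fun ⟨j, i'⟩ => ?_
  fin_cases j <;> simp [regA_apply, Pi.single_apply, sub_eq_iff_eq_add]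

theorem regB_single_zero (i : Fin 4) : regB k (Pi.single (0, i) 1) = Pi.single (1, i) 1 := by
  refine funext fun ⟨j, i'⟩ => ?_
  fin_cases j <;> simp [regB_apply, Pi.single_apply]

open Fin.NatCast in
theorem regA_pow_single_zero (n : ℕ) :
    (regA k ξ ^ n) (Pi.single 0 1) = Pi.single (0, (n : Fin 4)) 1 := by
  induction n with
  | zero => rfl
  | succ n ih => rw [pow_succ', Module.End.mul_apply, ih, regA_single_zero, Nat.cast_succ]

theorem regularRep_monomial (hξ : ξ ^ 4 = 1) (p : Fin 2 × Fin 4) :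
    regularRep k ξ hξ (monomial k ξ p) (Pi.single 0 1) = Pi.single p 1 := by
  obtain ⟨j, i⟩ := p
  have ha := regA_pow_single_zero (k := k) (ξ := ξ) i
  rw [Fin.cast_val_eq_self] at ha
  fin_cases j <;> simp [monomial, regularRep_aK, regularRep_bK, ha, regB_single_zero]

theorem linearIndependent_monomial (hξ : ξ ^ 4 = 1) : LinearIndependent k (monomial k ξ) := by
  refine LinearIndependent.of_comp
    (LinearMap.applyₗ (Pi.single 0 1) ∘ₗ (regularRep k ξ hξ).toLinearMap) ?_
  convert (Pi.basisFun k (Fin 2 × Fin 4)).linearIndependent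
  ext1 p
  simp [regularRep_monomial]

end RegularRepresentation

variable (k ξ) in
def monomialBasis (hξ : ξ ^ 4 = 1) : Module.Basis (Fin 2 × Fin 4) k (KAlg k ξ) :=
  .mk (linearIndependent_monomial hξ) (span_monomial hξ).ge

theorem monomialBasis_apply (hξ : ξ ^ 4 = 1) (p : Fin 2 × Fin 4) :
    monomialBasis k ξ hξ p = monomial k ξ p :=
  Module.Basis.mk_apply _ _ _

theorem monomialBasis_repr_aK_pow (hξ : ξ ^ 4 = 1) (n : ℕ) :
    (monomialBasis k ξ hξ).repr (aK k ξ ^ n) = Finsupp.single (0, Fin.ofNat 4 n) 1 := by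
  rw [← aK_pow_mod, ← Fin.val_ofNat, ← monomial_zero, ← monomialBasis_apply hξ,
    Module.Basis.repr_self]

theorem monomialBasis_repr_bK_mul_aK_pow (hξ : ξ ^ 4 = 1) (n : ℕ) :
    (monomialBasis k ξ hξ).repr (bK k ξ * aK k ξ ^ n) = Finsupp.single (1, Fin.ofNat 4 n) 1 := by
  rw [← aK_pow_mod, ← Fin.val_ofNat, ← monomial_one, ← monomialBasis_apply hξ,
    Module.Basis.repr_self]

theorem monomialBasis_repr_one (hξ : ξ ^ 4 = 1) :
    (monomialBasis k ξ hξ).repr 1 = Finsupp.single 0 1 := by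
  rw [← pow_zero (aK k ξ), monomialBasis_repr_aK_pow]
  rfl

theorem finrank_span_one_sub_aK_sq_bK_mul_aK (hξ : ξ ^ 4 = 1) :
    Module.finrank k (Submodule.span k {1 - aK k ξ ^ 2, bK k ξ * aK k ξ}) = 2 := by
  have hind : LinearIndependent k ![1 - aK k ξ ^ 2, bK k ξ * aK k ξ] := by
    refine LinearIndependent.pair_iff.mpr fun s t hst => ?_
    have h1 : 1 - aK k ξ ^ 2 = monomial k ξ 0 - monomial k ξ (0, 2) := by simp [monomial]
    have h2 : bK k ξ * aK k ξ = monomial k ξ (1, 1) := by simp [monomial]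
    have h := congrArg (monomialBasis k ξ hξ).repr hst
    rw [h1, h2, ← monomialBasis_apply hξ, ← monomialBasis_apply hξ, ← monomialBasis_apply hξ] at h
    constructor
    · simpa using Finsupp.ext_iff.mp h 0
    · simpa using Finsupp.ext_iff.mp h (1, 1)
  rw [← Matrix.range_cons_cons_empty, finrank_span_eq_card hind, Fintype.card_fin]

section Coproduct

variable {Δ : KAlg k ξ →ₐ[k] KAlg k ξ ⊗[k] KAlg k ξ}
  (hΔa : Δ (aK k ξ) = aK k ξ ⊗ₜ aK k ξ + ξ⁻¹ • (bK k ξ ⊗ₜ (bK k ξ * aK k ξ ^ 2)))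
  (hΔb : Δ (bK k ξ) = bK k ξ ⊗ₜ (aK k ξ ^ 3) + aK k ξ ⊗ₜ bK k ξ)
include hΔa

include hΔb in
theorem comul_bK_mul_aK_pow (n : ℕ) :
    Δ (bK k ξ * aK k ξ ^ n) =
      (bK k ξ * aK k ξ ^ n) ⊗ₜ (aK k ξ ^ (n + 3)) +
        (aK k ξ ^ (n + 1)) ⊗ₜ (bK k ξ * aK k ξ ^ n) := by
  induction n with
  | zero => simpa using hΔb
  | succ n ih =>
    rw [pow_succ, ← mul_assoc, map_mul, ih, hΔa]
    simp only [add_mul, mul_add, mul_smul_comm, Algebra.TensorProduct.tmul_mul_tmul, ← mul_assoc,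
      bK_mul_aK_pow_mul_bK, zero_mul, TensorProduct.zero_tmul, TensorProduct.tmul_zero, add_zero,
      smul_zero, ← pow_succ, add_right_comm n 3 1]

theorem exists_comul_aK_pow (hξ : ξ ^ 4 = 1) (n : ℕ) :
    ∃ x, Δ (aK k ξ ^ n) = (aK k ξ ^ n) ⊗ₜ (aK k ξ ^ n) + x ⊗ₜ (bK k ξ * aK k ξ ^ (n + 1)) := by
  induction n with
  | zero => exact ⟨0, by simp [Algebra.TensorProduct.one_def]⟩
  | succ n ih =>
    obtain ⟨x, hx⟩ := ih
    refine ⟨ξ⁻¹ • ξ ^ (3 * n) • (aK k ξ ^ n * bK k ξ) + x * aK k ξ, ?_⟩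
    have hb : aK k ξ ^ n * (bK k ξ * aK k ξ ^ 2) =
        ξ ^ (3 * n) • (bK k ξ * aK k ξ ^ (n + 1 + 1)) := by
      rw [← mul_assoc, aK_pow_mul_bK hξ, smul_mul_assoc, mul_assoc, ← pow_add]
    have hbb : bK k ξ * aK k ξ ^ (n + 1) * (bK k ξ * aK k ξ ^ 2) = 0 := by
      rw [← mul_assoc, bK_mul_aK_pow_mul_bK, zero_mul]
    rw [pow_succ, map_mul, hx, hΔa]
    simp only [add_mul, mul_add, mul_smul_comm, Algebra.TensorProduct.tmul_mul_tmul, hb, hbb,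
      TensorProduct.tmul_zero, add_zero, TensorProduct.add_tmul, ← TensorProduct.smul_tmul',
      TensorProduct.tmul_smul, ← pow_succ, mul_assoc]
    abel

theorem comul_aK_sq (hξ : ξ ^ 2 = -1) : Δ (aK k ξ ^ 2) = (aK k ξ ^ 2) ⊗ₜ (aK k ξ ^ 2) := by
  have hab : aK k ξ * bK k ξ = ξ ^ 3 • (bK k ξ * aK k ξ) := by
    simpa using aK_pow_mul_bK (by linear_combination (ξ ^ 2 - 1) * hξ) 1
  have hbb : bK k ξ * bK k ξ = 0 := by rw [← sq, bK_sq]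
  have hscalar : ξ⁻¹ + ξ⁻¹ * (ξ ^ 3 * ξ ^ 3) = 0 := by
    linear_combination ξ⁻¹ * (ξ ^ 4 - ξ ^ 2 + 1) * hξ
  rw [sq, map_mul, hΔa]
  simp only [add_mul, mul_add, mul_smul_comm, smul_mul_assoc, Algebra.TensorProduct.tmul_mul_tmul,
    ← mul_assoc, hab, hbb]
  simp only [mul_assoc, ← pow_succ, ← pow_succ', TensorProduct.zero_tmul, smul_zero, add_zero,
    ← TensorProduct.smul_tmul', TensorProduct.tmul_smul, smul_smul]
  rw [add_assoc, ← add_smul, hscalar, zero_smul, add_zero]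

include hΔb in
theorem rid_lTensor_coord_zero_comul (hξ : ξ ^ 4 = 1) (x : KAlg k ξ) :
    TensorProduct.rid k _ (((monomialBasis k ξ hξ).coord 0).lTensor _ (Δ x)) =
      (monomialBasis k ξ hξ).coord 0 x • 1 +
        (monomialBasis k ξ hξ).coord (1, 1) x • (bK k ξ * aK k ξ) := by
  set B := monomialBasis k ξ hξ
  suffices h : (TensorProduct.rid k _).toLinearMap ∘ₗ (B.coord 0).lTensor _ ∘ₗ Δ.toLinearMap =
      (B.coord 0).smulRight 1 + (B.coord (1, 1)).smulRight (bK k ξ * aK k ξ) from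
    LinearMap.congr_fun h x
  refine B.ext fun ⟨j, i⟩ => ?_
  simp only [B, monomialBasis_apply]
  have hdvd : ∀ i : Fin 4, 4 ∣ (i : ℕ) + 3 ↔ i = 1 := by decide
  fin_cases j
  · obtain ⟨y, hy⟩ := exists_comul_aK_pow hΔa hξ i
    simp +contextual [monomial_zero, hy, monomialBasis_repr_aK_pow,
      monomialBasis_repr_bK_mul_aK_pow, Finsupp.single_apply]
  · simp +contextual [monomial_one, comul_bK_mul_aK_pow hΔa hΔb, monomialBasis_repr_aK_pow,
      monomialBasis_repr_bK_mul_aK_pow, Finsupp.single_apply, hdvd]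

include hΔb in
theorem skewPrimitives_eq_span (hξ : ξ ^ 2 = -1) :
    skewPrimitives Δ.toLinearMap 1 (aK k ξ ^ 2) =
      Submodule.span k {1 - aK k ξ ^ 2, bK k ξ * aK k ξ} := by
  have hξ4 : ξ ^ 4 = 1 := by linear_combination (ξ ^ 2 - 1) * hξ
  refine le_antisymm (fun c hc => ?_) (Submodule.span_le.mpr ?_)
  · have h := rid_lTensor_coord_zero_comul hΔa hΔb hξ4 c
    rw [mem_skewPrimitives, AlgHom.toLinearMap_apply] at hc
    simp only [hc, map_add, LinearMap.lTensor_tmul, Module.Basis.coord_apply,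
      monomialBasis_repr_one, Finsupp.single_eq_same, rid_tmul, one_smul] at h
    refine Submodule.mem_span_pair.mpr ⟨(monomialBasis k ξ hξ4).repr c 0,
      (monomialBasis k ξ hξ4).repr c (1, 1), ?_⟩
    linear_combination (norm := module) -h
  · rintro _ (rfl | rfl) <;> rw [SetLike.mem_coe, mem_skewPrimitives, AlgHom.toLinearMap_apply]
    · rw [map_sub, map_one, comul_aK_sq hΔa hξ, Algebra.TensorProduct.one_def,
        TensorProduct.sub_tmul, TensorProduct.tmul_sub]
      abel
    · simpa [aK_pow_four] using comul_bK_mul_aK_pow hΔa hΔb 1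

end Coproduct

end KAlg

theorem stmt_3_general (k : Type) [Field k] (ξ : k)
    (hξ : IsPrimitiveRoot ξ 4)
    (Δ : KAlg k ξ →ₐ[k] KAlg k ξ ⊗[k] KAlg k ξ)
    (hΔa : Δ (aK k ξ) = aK k ξ ⊗ₜ aK k ξ + ξ⁻¹ • (bK k ξ ⊗ₜ (bK k ξ * aK k ξ ^ 2)))
    (hΔb : Δ (bK k ξ) = bK k ξ ⊗ₜ (aK k ξ ^ 3) + aK k ξ ⊗ₜ bK k ξ) :
    {c : KAlg k ξ | Δ c = c ⊗ₜ 1 + (aK k ξ ^ 2) ⊗ₜ c} =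
      (Submodule.span k {1 - aK k ξ ^ 2, bK k ξ * aK k ξ} : Set (KAlg k ξ)) ∧
    Module.finrank k
      (Submodule.span k {1 - aK k ξ ^ 2, bK k ξ * aK k ξ} : Submodule k (KAlg k ξ)) = 2 := by
  have hξ2 : ξ ^ 2 = -1 := (hξ.pow_of_dvd two_ne_zero (by norm_num)).eq_neg_one_of_two_right
  refine ⟨?_, KAlg.finrank_span_one_sub_aK_sq_bK_mul_aK hξ.pow_eq_one⟩
  rw [← KAlg.skewPrimitives_eq_span hΔa hΔb hξ2]
  ext c
  exact (mem_skewPrimitives (Δ := Δ.toLinearMap)).symm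

/-- The space `P_{1,a²}(K) = {c ∈ K : Δ(c) = c⊗1 + a²⊗c}` of `(1,a²)`-skew-primitive
elements of `K` equals the two-dimensional linear span of `1 − a²` and `ba`. -/
theorem stmt_3 (k : Type) [Field k] [IsAlgClosed k] [CharZero k] (ξ : k)
    (hξ : IsPrimitiveRoot ξ 4)
    (Δ : KAlg k ξ →ₐ[k] KAlg k ξ ⊗[k] KAlg k ξ)
    (hΔa : Δ (aK k ξ) = aK k ξ ⊗ₜ aK k ξ + ξ⁻¹ • (bK k ξ ⊗ₜ (bK k ξ * aK k ξ ^ 2)))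
    (hΔb : Δ (bK k ξ) = bK k ξ ⊗ₜ (aK k ξ ^ 3) + aK k ξ ⊗ₜ bK k ξ) :
    {c : KAlg k ξ | Δ c = c ⊗ₜ 1 + (aK k ξ ^ 2) ⊗ₜ c} =
      (Submodule.span k {1 - aK k ξ ^ 2, bK k ξ * aK k ξ} : Set (KAlg k ξ)) ∧
    Module.finrank k
      (Submodule.span k {1 - aK k ξ ^ 2, bK k ξ * aK k ξ} : Submodule k (KAlg k ξ)) = 2 :=
  stmt_3_general k ξ hξ Δ hΔa hΔb

end
end

section
/- The algebra A is 8-dimensional over k with linear basis {g^i, g^i x : 0 ≤ i ≤ 3}, and there exists a Hopf algebra structure on A extending its algebra structure such that Δ(g) = g⊗g, Δ(x) = x⊗1 + g⊗x, ε(g) = 1, and ε(x) = 0. -/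
open TensorProduct

noncomputable section

/-- Generators of the Radford algebra `A`. -/
inductive AGen : Type
  | g | x

/-- The defining relations of the Radford algebra `A`:
`g⁴ = 1`, `x² = 1 − g²`, `gx = −xg`. -/
inductive ARel (k : Type) [Field k] : FreeAlgebra k AGen → FreeAlgebra k AGen → Prop
  | g4 : ARel k ((FreeAlgebra.ι k AGen.g) ^ 4) 1
  | x2 : ARel k ((FreeAlgebra.ι k AGen.x) ^ 2) (1 - (FreeAlgebra.ι k AGen.g) ^ 2)
  | gx : ARel k (FreeAlgebra.ι k AGen.g * FreeAlgebra.ι k AGen.x)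
      (-(FreeAlgebra.ι k AGen.x * FreeAlgebra.ι k AGen.g))

/-- The Radford algebra `A` of dimension 8. -/
abbrev AAlg (k : Type) [Field k] : Type := RingQuot (ARel k)

/-- The image of the generator `g` in `A`. -/
def gA (k : Type) [Field k] : AAlg k := RingQuot.mkAlgHom k (ARel k) (FreeAlgebra.ι k AGen.g)

/-- The image of the generator `x` in `A`. -/
def xA (k : Type) [Field k] : AAlg k := RingQuot.mkAlgHom k (ARel k) (FreeAlgebra.ι k AGen.x)

/-- `(Δ, ε, S)` is a Hopf algebra structure on the `k`-algebra `H` (extending its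
algebra structure): `Δ` and `ε` are algebra maps, `Δ` is coassociative, `ε` is a
counit for `Δ`, and `S` satisfies the antipode axioms. -/
def IsHopfAlgebraStructure (k : Type) [Field k] (H : Type) [Ring H] [Algebra k H]
    (Δ : H →ₐ[k] H ⊗[k] H) (ε : H →ₐ[k] k) (S : H →ₗ[k] H) : Prop :=
  (∀ h : H, (TensorProduct.assoc k H H H) (Δ.toLinearMap.rTensor H (Δ h)) =
      Δ.toLinearMap.lTensor H (Δ h)) ∧
  (∀ h : H, (TensorProduct.lid k H) (ε.toLinearMap.rTensor H (Δ h)) = h) ∧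
  (∀ h : H, (TensorProduct.rid k H) (ε.toLinearMap.lTensor H (Δ h)) = h) ∧
  (∀ h : H, (LinearMap.mul' k H) (S.rTensor H (Δ h)) = algebraMap k H (ε h)) ∧
  (∀ h : H, (LinearMap.mul' k H) (S.lTensor H (Δ h)) = algebraMap k H (ε h))

/-!
For any pair `g`, `x` in a ring satisfying the three defining relations, the words `gⁱxⁿ`
(`i < 4`, `n < 2`) span the algebra generated by `g` and `x`: right multiplication by `g` or `x`
maps their span into itself. In `A` they are moreover independent, because `A` acts on the
8-dimensional space with basis `e (i, n)` by the formulas of left multiplication on the words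
`gⁱxⁿ`, and `gⁱxⁿ` sends `e (0, 0)` to `e (i, n)`.

The maps `Δ`, `ε` and the antipode `S` (an anti-homomorphism with `S g = g³`, `S x = x g³`)
exist because their prescribed values on `g` and `x` satisfy the relations again, in `A ⊗ A`,
`k` and `Aᵐᵒᵖ`. The coalgebra axioms compare algebra maps, so they only need checking on `g` and
`x`. The antipode axioms do not, but since `Δ` is multiplicative and `S` anti-multiplicative, the
set where they hold is closed under products, so the generators suffice there too.
-/

open Fin.NatCast

theorem Submodule.eq_top_of_one_mem_of_mul_mem {R A : Type*} [CommSemiring R] [Semiring A]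
    [Algebra R A] {s : Set A} (hs : Algebra.adjoin R s = ⊤) (M : Submodule R A)
    (hone : 1 ∈ M) (hmul : ∀ a ∈ M, ∀ b ∈ s, a * b ∈ M) : M = ⊤ := by
  have key : ∀ b ∈ Algebra.adjoin R s, ∀ a ∈ M, a * b ∈ M := fun b hb => by
    induction hb using Algebra.adjoin_induction with
    | mem b hb => exact fun a ha => hmul a ha b hb
    | algebraMap r =>
      intro a ha
      rw [← Algebra.commutes, ← Algebra.smul_def]
      exact M.smul_mem r ha
    | add b c _ _ hb hc => exact fun a ha => mul_add a b c ▸ M.add_mem (hb a ha) (hc a ha)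
    | mul b c _ _ hb hc => exact fun a ha => mul_assoc a b c ▸ hc _ (hb a ha)
  refine M.eq_top_iff'.2 fun b => ?_
  simpa using key b (hs ▸ Algebra.mem_top) 1 hone

namespace LinearMap

variable {R H : Type*} [CommSemiring R] [Semiring H] [Algebra R H] (S : H →ₗ[R] H)

theorem mul'_rTensor_mul_tmul (hS : ∀ a b, S (a * b) = S b * S a) (u : H ⊗[R] H)
    (b₁ b₂ : H) :
    mul' R H (S.rTensor H (u * b₁ ⊗ₜ b₂)) = S b₁ * mul' R H (S.rTensor H u) * b₂ := by
  induction u using TensorProduct.induction_on with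
  | zero => simp
  | tmul a₁ a₂ => simp [hS, mul_assoc]
  | add u v hu hv => simp only [add_mul, map_add, hu, hv, mul_add]

theorem mul'_lTensor_tmul_mul (hS : ∀ a b, S (a * b) = S b * S a) (u : H ⊗[R] H)
    (a₁ a₂ : H) :
    mul' R H (S.lTensor H (a₁ ⊗ₜ a₂ * u)) = a₁ * mul' R H (S.lTensor H u) * S a₂ := by
  induction u using TensorProduct.induction_on with
  | zero => simp
  | tmul b₁ b₂ => simp [hS, mul_assoc]
  | add u v hu hv => simp only [mul_add, map_add, hu, hv, add_mul]

variable (Δ : H →ₐ[R] H ⊗[R] H) (ε : H →ₐ[R] R) {s : Set H}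

theorem mul'_rTensor_comul_of_adjoin_eq_top (hS1 : S 1 = 1) (hS : ∀ a b, S (a * b) = S b * S a)
    (hs : Algebra.adjoin R s = ⊤)
    (h : ∀ a ∈ s, mul' R H (S.rTensor H (Δ a)) = algebraMap R H (ε a)) (b : H) :
    mul' R H (S.rTensor H (Δ b)) = algebraMap R H (ε b) := by
  induction (hs ▸ Algebra.mem_top : b ∈ Algebra.adjoin R s) using Algebra.adjoin_induction with
  | mem a ha => exact h a ha
  | algebraMap r => simp [Algebra.algebraMap_eq_smul_one, Algebra.TensorProduct.one_def, hS1]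
  | add a b _ _ ha hb => simp only [map_add, ha, hb]
  | mul a b _ _ ha hb =>
    have key : ∀ v, mul' R H (S.rTensor H (Δ a * v)) = ε a • mul' R H (S.rTensor H v) := by
      intro v
      induction v using TensorProduct.induction_on with
      | zero => simp
      | tmul b₁ b₂ =>
        rw [S.mul'_rTensor_mul_tmul hS, ha, rTensor_tmul, mul'_apply, ← Algebra.commutes,
          mul_assoc, ← Algebra.smul_def]
      | add u v hu hv => simp only [mul_add, map_add, hu, hv, smul_add]
    rw [map_mul, key, hb, map_mul, Algebra.smul_def, ← map_mul]

theorem mul'_lTensor_comul_of_adjoin_eq_top (hS1 : S 1 = 1) (hS : ∀ a b, S (a * b) = S b * S a)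
    (hs : Algebra.adjoin R s = ⊤)
    (h : ∀ a ∈ s, mul' R H (S.lTensor H (Δ a)) = algebraMap R H (ε a)) (b : H) :
    mul' R H (S.lTensor H (Δ b)) = algebraMap R H (ε b) := by
  induction (hs ▸ Algebra.mem_top : b ∈ Algebra.adjoin R s) using Algebra.adjoin_induction with
  | mem a ha => exact h a ha
  | algebraMap r => simp [Algebra.algebraMap_eq_smul_one, Algebra.TensorProduct.one_def, hS1]
  | add a b _ _ ha hb => simp only [map_add, ha, hb]
  | mul a b _ _ ha hb =>
    have key : ∀ u, mul' R H (S.lTensor H (u * Δ b)) = ε b • mul' R H (S.lTensor H u) := by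
      intro u
      induction u using TensorProduct.induction_on with
      | zero => simp
      | tmul a₁ a₂ =>
        rw [S.mul'_lTensor_tmul_mul hS, hb, lTensor_tmul, mul'_apply, ← Algebra.commutes,
          mul_assoc, ← Algebra.smul_def]
      | add u v hu hv => simp only [add_mul, map_add, hu, hv, smul_add]
    rw [map_mul, key, ha, map_mul, Algebra.smul_def, ← map_mul, mul_comm]

end LinearMap

structure IsRadfordPair {B : Type*} [Ring B] (g x : B) : Prop where
  pow_four : g ^ 4 = 1
  sq : x ^ 2 = 1 - g ^ 2
  anticomm : g * x = -(x * g)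

namespace IsRadfordPair

variable {B : Type*} [Ring B] {g x : B}

theorem anticomm' (h : IsRadfordPair g x) : x * g = -(g * x) := by
  rw [h.anticomm, neg_neg]

theorem pow_mod_four (h : IsRadfordPair g x) (m : ℕ) : g ^ (m % 4) = g ^ m := by
  conv_rhs => rw [← Nat.div_add_mod m 4, pow_add, pow_mul, h.pow_four, one_pow, one_mul]

theorem sq_mul_comm (h : IsRadfordPair g x) : g ^ 2 * x = x * g ^ 2 := by
  rw [pow_two, mul_assoc, h.anticomm, mul_neg, ← mul_assoc, h.anticomm, neg_mul, neg_neg,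
    mul_assoc]

theorem pow_three_mul (h : IsRadfordPair g x) : g ^ 3 * x = -(x * g ^ 3) := by
  rw [pow_succ, mul_assoc, h.anticomm, mul_neg, ← mul_assoc, h.sq_mul_comm, mul_assoc,
    ← pow_succ]

theorem mul_pow_three_add_pow_three_mul (h : IsRadfordPair g x) : x * g ^ 3 + g ^ 3 * x = 0 := by
  rw [h.pow_three_mul, add_neg_cancel]

theorem add_mul_mul_pow_three (h : IsRadfordPair g x) : x + g * (x * g ^ 3) = 0 := by
  rw [← mul_assoc, h.anticomm, neg_mul, mul_assoc, ← pow_succ', h.pow_four, mul_one,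
    add_neg_cancel]

theorem pow_three_mul_self (h : IsRadfordPair g x) : g ^ 3 * g ^ 3 = g ^ 2 := by
  rw [← pow_add]
  exact (h.pow_mod_four 6).symm

theorem sq_mul_self (h : IsRadfordPair g x) : g ^ 2 * g ^ 2 = 1 := by
  rw [← pow_add]
  exact h.pow_four

theorem op (h : IsRadfordPair g x) :
    IsRadfordPair (MulOpposite.op (g ^ 3)) (MulOpposite.op (x * g ^ 3)) where
  pow_four := by
    rw [← MulOpposite.op_pow, ← pow_mul, mul_comm, pow_mul, h.pow_four, one_pow,
      MulOpposite.op_one]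
  sq := by
    have key : (x * g ^ 3) ^ 2 = 1 - (g ^ 3) ^ 2 := calc
      (x * g ^ 3) ^ 2 = -(x ^ 2 * (g ^ 3 * g ^ 3)) := by
        rw [pow_two, pow_two, mul_assoc, ← mul_assoc (g ^ 3), h.pow_three_mul]
        noncomm_ring
      _ = 1 - (g ^ 3) ^ 2 := by
        rw [h.sq, pow_two (g ^ 3), h.pow_three_mul_self, sub_mul, one_mul, h.sq_mul_self, neg_sub]
    rw [← MulOpposite.op_pow, key, MulOpposite.op_sub, MulOpposite.op_one, MulOpposite.op_pow]
  anticomm := by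
    rw [← MulOpposite.op_mul, ← MulOpposite.op_mul, ← MulOpposite.op_neg, ← mul_assoc,
      h.pow_three_mul, neg_mul, neg_neg]

variable {R : Type*} [CommRing R] [Algebra R B]

theorem tmul (h : IsRadfordPair g x) : IsRadfordPair (g ⊗ₜ[R] g) (x ⊗ₜ 1 + g ⊗ₜ x) where
  pow_four := by rw [Algebra.TensorProduct.tmul_pow, h.pow_four, Algebra.TensorProduct.one_def]
  sq := by
    rw [pow_two, add_mul, mul_add, mul_add]
    simp only [Algebra.TensorProduct.tmul_mul_tmul, one_mul, mul_one, h.anticomm,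
      TensorProduct.neg_tmul, ← pow_two, h.sq, Algebra.TensorProduct.tmul_pow,
      TensorProduct.sub_tmul, TensorProduct.tmul_sub, Algebra.TensorProduct.one_def, one_pow]
    abel
  anticomm := by
    simp only [mul_add, add_mul, Algebra.TensorProduct.tmul_mul_tmul, one_mul, mul_one, h.anticomm,
      TensorProduct.neg_tmul, TensorProduct.tmul_neg]
    abel

theorem span_eq_top (h : IsRadfordPair g x) (hgen : Algebra.adjoin R {g, x} = ⊤) :
    Submodule.span R (Set.range fun p : Fin 4 × Fin 2 => g ^ (p.1 : ℕ) * x ^ (p.2 : ℕ)) =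
      ⊤ := by
  set M := Submodule.span R (Set.range fun p : Fin 4 × Fin 2 => g ^ (p.1 : ℕ) * x ^ (p.2 : ℕ))
  have hmem (m : ℕ) (n : Fin 2) : g ^ m * x ^ (n : ℕ) ∈ M :=
    Submodule.subset_span ⟨((m : Fin 4), n), by simp only [Fin.val_natCast, h.pow_mod_four]⟩
  refine Submodule.eq_top_of_one_mem_of_mul_mem hgen M (by simpa using hmem 0 0) fun a ha b hb => ?_
  refine Submodule.span_le (p := M.comap (LinearMap.mulRight R b)).2 ?_ ha
  rintro _ ⟨⟨i, n⟩, rfl⟩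
  simp only [SetLike.mem_coe, Submodule.mem_comap, LinearMap.mulRight_apply]
  rcases hb with rfl | rfl <;> fin_cases n <;> simp only [pow_zero, pow_one, mul_one]
  · simpa [← pow_succ] using hmem (i + 1) 0
  · rw [mul_assoc, h.anticomm', mul_neg, ← mul_assoc, ← pow_succ]
    simpa using neg_mem (hmem (i + 1) 1)
  · simpa using hmem i 1
  · rw [mul_assoc, ← pow_two, h.sq, mul_sub, mul_one, ← pow_add]
    simpa using sub_mem (hmem i 0) (hmem (i + 2) 0)

end IsRadfordPair

theorem isRadfordPair_one_zero {R : Type*} [Ring R] : IsRadfordPair (1 : R) 0 where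
  pow_four := one_pow 4
  sq := by simp
  anticomm := by simp

variable {k : Type} [Field k]

theorem isRadfordPair_gA_xA : IsRadfordPair (gA k) (xA k) where
  pow_four := by simpa [gA] using RingQuot.mkAlgHom_rel k (ARel.g4 (k := k))
  sq := by simpa [xA, gA] using RingQuot.mkAlgHom_rel k (ARel.x2 (k := k))
  anticomm := by simpa [xA, gA] using RingQuot.mkAlgHom_rel k (ARel.gx (k := k))

namespace AAlg

variable {B : Type*} [Ring B] [Algebra k B]

def lift {a b : B} (h : IsRadfordPair a b) : AAlg k →ₐ[k] B :=
  RingQuot.liftAlgHom k ⟨FreeAlgebra.lift k (fun | .g => a | .x => b), by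
    rintro _ _ (_ | _ | _) <;> simp [h.pow_four, h.sq, h.anticomm]⟩

@[simp] theorem lift_gA {a b : B} (h : IsRadfordPair a b) : lift h (gA k) = a := by
  simp [lift, gA]

@[simp] theorem lift_xA {a b : B} (h : IsRadfordPair a b) : lift h (xA k) = b := by
  simp [lift, xA]

theorem hom_ext {C : Type*} [Semiring C] [Algebra k C] {f f' : AAlg k →ₐ[k] C}
    (hg : f (gA k) = f' (gA k)) (hx : f (xA k) = f' (xA k)) : f = f' := by
  apply RingQuot.ringQuot_ext'
  apply FreeAlgebra.hom_ext
  funext t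
  cases t
  exacts [hg, hx]

theorem adjoin_gA_xA : Algebra.adjoin k {gA k, xA k} = ⊤ := by
  have hgen : {gA k, xA k} = RingQuot.mkAlgHom k (ARel k) '' Set.range (FreeAlgebra.ι k) := by
    rw [← Set.range_comp]
    ext a
    constructor
    · rintro (rfl | rfl)
      exacts [⟨.g, rfl⟩, ⟨.x, rfl⟩]
    · rintro ⟨(_ | _), rfl⟩
      exacts [Or.inl rfl, Or.inr rfl]
  rw [hgen, Algebra.adjoin_image, FreeAlgebra.adjoin_range_ι, Algebra.map_top,
    AlgHom.range_eq_top]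
  exact RingQuot.mkAlgHom_surjective k (ARel k)

end AAlg

namespace RadfordRep

open Finsupp

variable (k) in
abbrev V : Type := Fin 4 × Fin 2 →₀ k

variable (k) in
def sgn (i : Fin 4) : k := (-1) ^ (i : ℕ)

theorem sgn_add_one (i : Fin 4) : sgn k (i + 1) = -sgn k i := by
  fin_cases i <;> simp [sgn] <;> norm_num

theorem sgn_add_two (i : Fin 4) : sgn k (i + 2) = sgn k i := by
  rw [show (2 : Fin 4) = 1 + 1 from rfl, ← add_assoc, sgn_add_one, sgn_add_one, neg_neg]

theorem sgn_mul_self (i : Fin 4) : sgn k i * sgn k i = 1 := by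
  rw [sgn, ← mul_pow, neg_one_mul, neg_neg, one_pow]

-- Left multiplication by `g` and by `x` on `A`, written in the basis `gⁱxⁿ`: it uses
-- `x gⁱ = (-1)ⁱ gⁱ x` and `x gⁱ x = (-1)ⁱ (gⁱ - gⁱ⁺²)`.
variable (k) in
def gRep : Module.End k (V k) :=
  linearCombination k fun p => single (p.1 + 1, p.2) 1

variable (k) in
def xRep : Module.End k (V k) :=
  linearCombination k fun
    | (i, 0) => sgn k i • single (i, 1) 1
    | (i, 1) => sgn k i • (single (i, 0) 1 - single (i + 2, 0) 1)

theorem gRep_single (p : Fin 4 × Fin 2) (c : k) :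
    gRep k (single p c) = single (p.1 + 1, p.2) c := by
  simp [gRep]

theorem xRep_single_zero (i : Fin 4) (c : k) :
    xRep k (single (i, 0) c) = single (i, 1) (sgn k i * c) := by
  simp [xRep, mul_comm]

theorem xRep_single_one (i : Fin 4) (c : k) :
    xRep k (single (i, 1) c) = single (i, 0) (sgn k i * c) - single (i + 2, 0) (sgn k i * c) := by
  simp [xRep, smul_sub, mul_comm]

theorem isRadfordPair : IsRadfordPair (gRep k) (xRep k) where
  pow_four := by
    refine Finsupp.basisSingleOne.ext fun p => ?_
    simp [pow_succ, gRep_single, add_assoc]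
  sq := by
    refine Finsupp.basisSingleOne.ext fun ⟨i, n⟩ => ?_
    fin_cases n <;>
      simp [pow_two, gRep_single, xRep_single_zero, xRep_single_one, sgn_mul_self, sgn_add_two,
        add_assoc]
  anticomm := by
    refine Finsupp.basisSingleOne.ext fun ⟨i, n⟩ => ?_
    fin_cases n
    · simp [gRep_single, xRep_single_zero, sgn_add_one]
    · simp [gRep_single, xRep_single_one, sgn_add_one, add_assoc]
      abel

theorem gRep_pow_single (m : ℕ) (p : Fin 4 × Fin 2) (c : k) :
    (gRep k ^ m) (single p c) = single (p.1 + m, p.2) c := by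
  induction m with
  | zero => simp
  | succ m ih => rw [pow_succ', Module.End.mul_apply, ih, gRep_single]; simp [add_assoc]

end RadfordRep

theorem linearIndependent_gA_pow_mul_xA_pow :
    LinearIndependent k fun p : Fin 4 × Fin 2 => gA k ^ (p.1 : ℕ) * xA k ^ (p.2 : ℕ) := by
  let ev : AAlg k →ₗ[k] RadfordRep.V k := LinearMap.applyₗ (Finsupp.single (0, 0) 1) ∘ₗ
    (AAlg.lift (k := k) (RadfordRep.isRadfordPair (k := k))).toLinearMap
  refine LinearIndependent.of_comp ev ?_
  convert (Finsupp.basisSingleOne (R := k) (ι := Fin 4 × Fin 2)).linearIndependent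
  ext1 ⟨i, n⟩
  fin_cases n <;> simp [ev, RadfordRep.gRep_pow_single, RadfordRep.xRep_single_zero, RadfordRep.sgn]

variable (k) in
def radfordBasis : Module.Basis (Fin 4 × Fin 2) k (AAlg k) :=
  Module.Basis.mk linearIndependent_gA_pow_mul_xA_pow
    (isRadfordPair_gA_xA.span_eq_top AAlg.adjoin_gA_xA).ge

namespace AAlg

def comul : AAlg k →ₐ[k] AAlg k ⊗[k] AAlg k := lift isRadfordPair_gA_xA.tmul

def counit : AAlg k →ₐ[k] k := lift isRadfordPair_one_zero

def antipode : AAlg k →ₗ[k] AAlg k :=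
  (MulOpposite.opLinearEquiv k).symm.toLinearMap ∘ₗ (lift isRadfordPair_gA_xA.op).toLinearMap

@[simp] theorem comul_gA : comul (gA k) = gA k ⊗ₜ gA k := lift_gA _
@[simp] theorem comul_xA : comul (xA k) = xA k ⊗ₜ 1 + gA k ⊗ₜ xA k := lift_xA _
@[simp] theorem counit_gA : counit (gA k) = 1 := lift_gA _
@[simp] theorem counit_xA : counit (xA k) = 0 := lift_xA _
@[simp] theorem antipode_gA : antipode (gA k) = gA k ^ 3 := by simp [antipode]
@[simp] theorem antipode_xA : antipode (xA k) = xA k * gA k ^ 3 := by simp [antipode]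

theorem antipode_one : antipode (1 : AAlg k) = 1 := by simp [antipode]

theorem antipode_mul (a b : AAlg k) : antipode (a * b) = antipode b * antipode a := by
  simp [antipode]

theorem comul_coassoc (h : AAlg k) :
    TensorProduct.assoc k _ _ _ (comul.toLinearMap.rTensor (AAlg k) (comul h)) =
      comul.toLinearMap.lTensor (AAlg k) (comul h) := by
  have key : (Algebra.TensorProduct.assoc k k k (AAlg k) (AAlg k) (AAlg k)).toAlgHom.comp
      ((Algebra.TensorProduct.map comul (AlgHom.id k _)).comp comul) =
      (Algebra.TensorProduct.map (AlgHom.id k _) comul).comp comul := by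
    apply hom_ext <;> simp [add_tmul, tmul_add, add_assoc, Algebra.TensorProduct.one_def]
  exact AlgHom.congr_fun key h

theorem counit_rTensor_comul (h : AAlg k) :
    TensorProduct.lid k (AAlg k) (counit.toLinearMap.rTensor (AAlg k) (comul h)) = h := by
  have key : (Algebra.TensorProduct.lid k (AAlg k)).toAlgHom.comp
      ((Algebra.TensorProduct.map counit (AlgHom.id k _)).comp comul) = AlgHom.id k _ := by
    apply hom_ext <;> simp
  exact AlgHom.congr_fun key h

theorem counit_lTensor_comul (h : AAlg k) :
    TensorProduct.rid k (AAlg k) (counit.toLinearMap.lTensor (AAlg k) (comul h)) = h := by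
  have key : (Algebra.TensorProduct.rid k k (AAlg k)).toAlgHom.comp
      ((Algebra.TensorProduct.map (AlgHom.id k _) counit).comp comul) = AlgHom.id k _ := by
    apply hom_ext <;> simp
  exact AlgHom.congr_fun key h

theorem mul'_antipode_rTensor_comul (h : AAlg k) :
    LinearMap.mul' k (AAlg k) (antipode.rTensor (AAlg k) (comul h)) =
      algebraMap k (AAlg k) (counit h) := by
  refine antipode.mul'_rTensor_comul_of_adjoin_eq_top comul counit antipode_one antipode_mul
    adjoin_gA_xA ?_ h
  rintro a (rfl | rfl)
  · simp [← pow_succ, isRadfordPair_gA_xA.pow_four]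
  · simpa using isRadfordPair_gA_xA.mul_pow_three_add_pow_three_mul

theorem mul'_antipode_lTensor_comul (h : AAlg k) :
    LinearMap.mul' k (AAlg k) (antipode.lTensor (AAlg k) (comul h)) =
      algebraMap k (AAlg k) (counit h) := by
  refine antipode.mul'_lTensor_comul_of_adjoin_eq_top comul counit antipode_one antipode_mul
    adjoin_gA_xA ?_ h
  rintro a (rfl | rfl)
  · simp [← pow_succ', isRadfordPair_gA_xA.pow_four]
  · simpa [antipode_one] using isRadfordPair_gA_xA.add_mul_mul_pow_three

end AAlg

theorem stmt_6_general (k : Type) [Field k] :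
    Module.finrank k (AAlg k) = 8 ∧
    (∃ B : Module.Basis (Fin 4 × Fin 2) k (AAlg k),
      ∀ (i : Fin 4) (n : Fin 2), B (i, n) = gA k ^ (i : ℕ) * xA k ^ (n : ℕ)) ∧
    ∃ (Δ : AAlg k →ₐ[k] AAlg k ⊗[k] AAlg k) (ε : AAlg k →ₐ[k] k)
      (S : AAlg k →ₗ[k] AAlg k),
      IsHopfAlgebraStructure k (AAlg k) Δ ε S ∧
      Δ (gA k) = gA k ⊗ₜ gA k ∧
      Δ (xA k) = xA k ⊗ₜ 1 + gA k ⊗ₜ xA k ∧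
      ε (gA k) = 1 ∧ ε (xA k) = 0 := by
  refine ⟨by simp [Module.finrank_eq_card_basis (radfordBasis k)],
    ⟨radfordBasis k, fun i n => Module.Basis.mk_apply _ _ (i, n)⟩,
    AAlg.comul, AAlg.counit, AAlg.antipode, ?_, AAlg.comul_gA, AAlg.comul_xA, AAlg.counit_gA,
    AAlg.counit_xA⟩
  exact ⟨AAlg.comul_coassoc, AAlg.counit_rTensor_comul, AAlg.counit_lTensor_comul,
    AAlg.mul'_antipode_rTensor_comul, AAlg.mul'_antipode_lTensor_comul⟩

/-- The Radford algebra `A` is 8-dimensional with basis `{gⁱ, gⁱx : 0 ≤ i ≤ 3}`,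
and it carries a Hopf algebra structure extending its algebra structure with
`Δ(g) = g⊗g`, `Δ(x) = x⊗1 + g⊗x`, `ε(g) = 1`, `ε(x) = 0`. -/
theorem stmt_6 (k : Type) [Field k] [IsAlgClosed k] [CharZero k] :
    Module.finrank k (AAlg k) = 8 ∧
    (∃ B : Module.Basis (Fin 4 × Fin 2) k (AAlg k),
      ∀ (i : Fin 4) (n : Fin 2), B (i, n) = gA k ^ (i : ℕ) * xA k ^ (n : ℕ)) ∧
    ∃ (Δ : AAlg k →ₐ[k] AAlg k ⊗[k] AAlg k) (ε : AAlg k →ₐ[k] k)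
      (S : AAlg k →ₗ[k] AAlg k),
      IsHopfAlgebraStructure k (AAlg k) Δ ε S ∧
      Δ (gA k) = gA k ⊗ₜ gA k ∧
      Δ (xA k) = xA k ⊗ₜ 1 + gA k ⊗ₜ xA k ∧
      ε (gA k) = 1 ∧ ε (xA k) = 0 :=
  stmt_6_general k

end
end

section
/- For each pair (i, j) ∈ Λ, the assignments sending a to the matrix diag(ξ^i, ξ^{i+1}), b to the matrix with (1,2)-entry 1 and all other entries 0, g to diag(ξ^j, −ξ^j), and x to the matrix with (1,2)-entry θ^{-1}ξ^{1−i}((−1)^i + ξ^j), (2,1)-entry θξ^{i−1}((−1)^i − ξ^j) and zeros on the diagonal, define a left D-module structure V_{i,j} on k^2. Each V_{i,j} is a simple D-module, and V_{i,j} ≅ V_{k,l} as D-modules implies (i,j) = (k,l). -/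
open TensorProduct

noncomputable section

/-- Generators of the Drinfeld double `D = D(K^cop)`. -/
inductive DGen : Type
  | a | b | g | x

variable (k : Type) [Field k] (ξ θ : k)

namespace DGen

/-- Shorthand for the generator `a` of the free algebra. -/
abbrev A : FreeAlgebra k DGen := FreeAlgebra.ι k DGen.a
/-- Shorthand for the generator `b` of the free algebra. -/
abbrev B : FreeAlgebra k DGen := FreeAlgebra.ι k DGen.b
/-- Shorthand for the generator `g` of the free algebra. -/
abbrev G : FreeAlgebra k DGen := FreeAlgebra.ι k DGen.g
/-- Shorthand for the generator `x` of the free algebra. -/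
abbrev X : FreeAlgebra k DGen := FreeAlgebra.ι k DGen.x

end DGen

open DGen

/-- The defining relations of the Drinfeld double `D`. -/
inductive DRel : FreeAlgebra k DGen → FreeAlgebra k DGen → Prop
  | a4 : DRel (A k ^ 4) 1
  | b2 : DRel (B k ^ 2) 0
  | ba : DRel (B k * A k) (ξ • (A k * B k))
  | g4 : DRel (G k ^ 4) 1
  | x2 : DRel (X k ^ 2) (1 - G k ^ 2)
  | gx : DRel (G k * X k) (-(X k * G k))
  | ag : DRel (A k * G k) (G k * A k)
  | ax : DRel (A k * X k - ξ • (X k * A k)) (-(θ • (B k * A k ^ 2 - G k * B k)))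
  | bg : DRel (B k * G k) (-(G k * B k))
  | bx : DRel (B k * X k - ξ • (X k * B k)) ((θ * ξ ^ 3) • (A k ^ 3 - G k * A k))

/-- The Drinfeld double `D = D(K^cop)` as an algebra. -/
abbrev DAlg : Type := RingQuot (DRel k ξ θ)

/-- The image of the generator `a` in `D`. -/
def aD : DAlg k ξ θ := RingQuot.mkAlgHom k (DRel k ξ θ) (A k)
/-- The image of the generator `b` in `D`. -/
def bD : DAlg k ξ θ := RingQuot.mkAlgHom k (DRel k ξ θ) (B k)
/-- The image of the generator `g` in `D`. -/
def gD : DAlg k ξ θ := RingQuot.mkAlgHom k (DRel k ξ θ) (G k)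
/-- The image of the generator `x` in `D`. -/
def xD : DAlg k ξ θ := RingQuot.mkAlgHom k (DRel k ξ θ) (X k)

/-- The matrix by which `a` acts on `V_{i,j}`. -/
def Ma (i : Fin 4) : Matrix (Fin 2) (Fin 2) k :=
  !![ξ ^ (i : ℕ), 0; 0, ξ ^ ((i : ℕ) + 1)]

/-- The matrix by which `b` acts on `V_{i,j}`. -/
def Mb : Matrix (Fin 2) (Fin 2) k := !![0, 1; 0, 0]

/-- The matrix by which `g` acts on `V_{i,j}`. -/
def Mg (j : Fin 4) : Matrix (Fin 2) (Fin 2) k :=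
  !![ξ ^ (j : ℕ), 0; 0, -ξ ^ (j : ℕ)]

/-- The matrix by which `x` acts on `V_{i,j}`. -/
def Mx (i j : Fin 4) : Matrix (Fin 2) (Fin 2) k :=
  !![0, θ⁻¹ * ξ ^ ((1 : ℤ) - (i : ℕ)) * ((-1 : k) ^ (i : ℕ) + ξ ^ (j : ℕ));
     θ * ξ ^ (((i : ℕ) : ℤ) - 1) * ((-1 : k) ^ (i : ℕ) - ξ ^ (j : ℕ)), 0]

/-- `ρ` is the representation of `D` on `k²` corresponding to `V_{i,j}`. -/
def IsRepV (i j : Fin 4) (ρ : DAlg k ξ θ →ₐ[k] Matrix (Fin 2) (Fin 2) k) : Prop :=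
  ρ (aD k ξ θ) = Ma k ξ i ∧ ρ (bD k ξ θ) = Mb k ∧
  ρ (gD k ξ θ) = Mg k ξ j ∧ ρ (xD k ξ θ) = Mx k ξ θ i j

/-!
Each defining relation of `D`, evaluated on `a ↦ diag(α, αξ)`, `b ↦ E₁₂`, `g ↦ diag(γ, -γ)`,
`x ↦ [[0, p], [q, 0]]`, reduces to a scalar identity; for `α = ξ^i`, `γ = ξ^j` and the entries
`p, q` of `Mx` these follow from `ξ² = -1` and `θ² = 2ξ`. A nonzero `D`-stable subspace
contains `e₁` (it contains `b v = v₂ e₁` for each of its vectors `v`), hence `x e₁ = q e₂`; and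
`q = θ ξ^(i-1) ((-1)^i - ξ^j)` vanishes exactly when `2i ≡ j (mod 4)`. An invertible matrix
commuting with `b` is upper triangular with nonzero `(0,0)` entry, so intertwining `a` and `g`
forces `ξ^i = ξ^i'` and `ξ^j = ξ^j'`.
-/

section PrimitiveFourthRoot

variable {K : Type*} [Field K] {ξ : K}

theorem IsPrimitiveRoot.sq_eq_neg_one_of_four (hξ : IsPrimitiveRoot ξ 4) : ξ ^ 2 = -1 :=
  (hξ.pow_of_dvd two_ne_zero (by norm_num)).eq_neg_one_of_two_right

theorem IsPrimitiveRoot.two_ne_zero_of_four (hξ : IsPrimitiveRoot ξ 4) : (2 : K) ≠ 0 := by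
  intro h2
  refine hξ.pow_ne_one_of_pos_of_lt two_ne_zero (by norm_num) ?_
  linear_combination hξ.sq_eq_neg_one_of_four - h2

theorem IsPrimitiveRoot.ne_zero_of_sq_eq_two_mul (hξ : IsPrimitiveRoot ξ 4) {θ : K}
    (hθ : θ ^ 2 = 2 * ξ) : θ ≠ 0 := by
  rintro rfl
  simp [hξ.two_ne_zero_of_four, hξ.ne_zero four_ne_zero, eq_comm] at hθ

theorem IsPrimitiveRoot.neg_one_pow_ne_pow_of_not_modEq (hξ : IsPrimitiveRoot ξ 4) {i j : ℕ}
    (hj : j < 4) (hij : ¬2 * i ≡ j [MOD 4]) : (-1 : K) ^ i ≠ ξ ^ j := by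
  rw [← hξ.sq_eq_neg_one_of_four, ← pow_mul, ← pow_mod_orderOf, ← hξ.eq_orderOf]
  intro h
  exact hij ((hξ.pow_inj (Nat.mod_lt _ four_pos) hj h).trans (Nat.mod_eq_of_lt hj).symm)

end PrimitiveFourthRoot

section TwoByTwo

open Matrix

variable {K : Type*} [Field K]

theorem eq_bot_or_eq_top_of_mulVec_mem {p q : K} (hq : q ≠ 0) (W : Submodule K (Fin 2 → K))
    (hb : ∀ v ∈ W, !![0, 1; 0, 0] *ᵥ v ∈ W) (hx : ∀ v ∈ W, !![0, p; q, 0] *ᵥ v ∈ W) :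
    W = ⊥ ∨ W = ⊤ := by
  refine or_iff_not_imp_left.2 fun hW => ?_
  obtain ⟨v, hv, hv0⟩ := W.ne_bot_iff.1 hW
  have he₀ : Pi.single 0 1 ∈ W := by
    by_cases hv1 : v 1 = 0
    · have hv0' : v 0 ≠ 0 := fun h => hv0 (funext fun t => by fin_cases t <;> assumption)
      convert W.smul_mem (v 0)⁻¹ hv using 1
      ext t; fin_cases t <;> simp [hv1, hv0']
    · convert W.smul_mem (v 1)⁻¹ (hb v hv) using 1
      ext t; fin_cases t <;> simp [vecHead, vecTail, hv1]
  have he₁ : Pi.single 1 1 ∈ W := by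
    convert W.smul_mem q⁻¹ (hx _ he₀) using 1
    ext t; fin_cases t <;> simp [hq]
  rw [eq_top_iff, ← (Pi.basisFun K (Fin 2)).span_eq, Submodule.span_le, Set.range_subset_iff]
  intro t; fin_cases t <;> simpa

theorem apply_zero_zero_ne_zero_of_commute_nilpotent {P : Matrix (Fin 2) (Fin 2) K}
    (hP : IsUnit P) (h : Commute !![0, 1; 0, 0] P) : P 0 0 ≠ 0 := by
  have h10 : P 1 0 = 0 := by simpa [Matrix.mul_apply] using congrFun₂ h 0 0
  intro h00
  apply ((Matrix.isUnit_iff_isUnit_det P).1 hP).ne_zero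
  simp [Matrix.det_fin_two, h00, h10]

theorem eq_of_diagonal_mul_eq_mul_diagonal {P : Matrix (Fin 2) (Fin 2) K} (hP : P 0 0 ≠ 0)
    {α α' δ δ' : K} (h : !![α', 0; 0, δ'] * P = P * !![α, 0; 0, δ]) : α' = α := by
  have h00 := congrFun₂ h 0 0
  simp [Matrix.mul_apply] at h00
  exact mul_right_cancel₀ hP (by linear_combination h00)

end TwoByTwo

section Representation

open Matrix

variable {k}

def repGen (α γ p q : k) : DGen → Matrix (Fin 2) (Fin 2) k
  | .a => !![α, 0; 0, α * ξ]
  | .b => !![0, 1; 0, 0]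
  | .g => !![γ, 0; 0, -γ]
  | .x => !![0, p; q, 0]

variable {ξ θ}

theorem lift_repGen_eq_of_dRel {α γ p q : k} (hξ2 : ξ ^ 2 = -1) (hα : α ^ 4 = 1)
    (hγ : γ ^ 4 = 1) (hpq : p * q = 1 - γ ^ 2) (hp : 2 * α * p = θ * (α ^ 2 + γ))
    (hq : q = θ * ξ ^ 3 * (α ^ 3 - γ * α)) ⦃u v : FreeAlgebra k DGen⦄ (h : DRel k ξ θ u v) :
    FreeAlgebra.lift k (repGen ξ α γ p q) u = FreeAlgebra.lift k (repGen ξ α γ p q) v := by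
  induction h
  all_goals
    simp only [map_pow, map_mul, map_sub, map_neg, map_smul, map_one, map_zero,
      FreeAlgebra.lift_ι_apply, repGen]
    rw [← Matrix.ext_iff]
    simp [Fin.forall_fin_two, pow_succ, ← mul_assoc, Matrix.mul_apply]
  case a4 =>
    exact ⟨by linear_combination hα, by linear_combination ξ ^ 4 * hα + (ξ ^ 2 - 1) * hξ2⟩
  case ba => ring
  case g4 => linear_combination hγ
  case x2 => exact ⟨by linear_combination hpq, by linear_combination hpq⟩
  case gx | ag => constructor <;> ring
  case ax => exact ⟨by linear_combination hp + (θ * α ^ 2 - α * p) * hξ2, by ring⟩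
  case bx =>
    exact ⟨by linear_combination hq, by linear_combination -ξ * hq - θ * ξ ^ 4 * α ^ 3 * hξ2⟩

theorem exists_algHom_repGen (hξ : IsPrimitiveRoot ξ 4) (hθ : θ ^ 2 = 2 * ξ) {α γ : k}
    (hα : α ^ 4 = 1) (hγ : γ ^ 4 = 1) :
    ∃ ρ : DAlg k ξ θ →ₐ[k] Matrix (Fin 2) (Fin 2) k, ∀ s : DGen,
      ρ (RingQuot.mkAlgHom k (DRel k ξ θ) (FreeAlgebra.ι k s)) =
        repGen ξ α γ (θ⁻¹ * (ξ / α) * (α ^ 2 + γ)) (θ * (α / ξ) * (α ^ 2 - γ)) s := by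
  have hξ0 : ξ ≠ 0 := hξ.ne_zero four_ne_zero
  have hθ0 : θ ≠ 0 := hξ.ne_zero_of_sq_eq_two_mul hθ
  have hα0 : α ≠ 0 := by rintro rfl; simp at hα
  refine ⟨RingQuot.liftAlgHom k ⟨_, lift_repGen_eq_of_dRel (p := θ⁻¹ * (ξ / α) * (α ^ 2 + γ))
    (q := θ * (α / ξ) * (α ^ 2 - γ)) hξ.sq_eq_neg_one_of_four hα hγ ?_ ?_ ?_⟩,
    fun s => by simp [RingQuot.liftAlgHom_mkAlgHom_apply]⟩
  · field_simp
    linear_combination hα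
  · field_simp
    linear_combination -(α ^ 2 + γ) * hθ
  · field_simp
    linear_combination (γ - α ^ 2) * hξ.pow_eq_one

theorem Mx_eq (hξ : IsPrimitiveRoot ξ 4) (i j : Fin 4) :
    Mx k ξ θ i j = !![0, θ⁻¹ * (ξ / ξ ^ (i : ℕ)) * ((ξ ^ (i : ℕ)) ^ 2 + ξ ^ (j : ℕ));
      θ * (ξ ^ (i : ℕ) / ξ) * ((ξ ^ (i : ℕ)) ^ 2 - ξ ^ (j : ℕ)), 0] := by
  have hξ0 : ξ ≠ 0 := hξ.ne_zero four_ne_zero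
  rw [Mx, zpow_sub₀ hξ0, zpow_sub₀ hξ0, zpow_one, zpow_natCast, ← hξ.sq_eq_neg_one_of_four,
    ← pow_mul, ← pow_mul, mul_comm 2]

theorem exists_isRepV (hξ : IsPrimitiveRoot ξ 4) (hθ : θ ^ 2 = 2 * ξ) (i j : Fin 4) :
    ∃ ρ : DAlg k ξ θ →ₐ[k] Matrix (Fin 2) (Fin 2) k, IsRepV k ξ θ i j ρ := by
  have hpow (n : ℕ) : (ξ ^ n) ^ 4 = 1 := by
    rw [← pow_mul, mul_comm, pow_mul, hξ.pow_eq_one, one_pow]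
  obtain ⟨ρ, hρ⟩ := exists_algHom_repGen hξ hθ (hpow i) (hpow j)
  refine ⟨ρ, ?_, ?_, ?_, ?_⟩
  · simp [aD, hρ, repGen, Ma, pow_succ]
  · simp [bD, hρ, repGen, Mb]
  · simp [gD, hρ, repGen, Mg]
  · simp [xD, hρ, repGen, Mx_eq hξ]

theorem IsRepV.eq_bot_or_eq_top (hξ : IsPrimitiveRoot ξ 4) (hθ : θ ^ 2 = 2 * ξ) {i j : Fin 4}
    (hij : ¬2 * (i : ℕ) ≡ (j : ℕ) [MOD 4]) {ρ : DAlg k ξ θ →ₐ[k] Matrix (Fin 2) (Fin 2) k}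
    (hρ : IsRepV k ξ θ i j ρ) (W : Submodule k (Fin 2 → k))
    (hW : ∀ d : DAlg k ξ θ, ∀ v ∈ W, ρ d *ᵥ v ∈ W) : W = ⊥ ∨ W = ⊤ := by
  have hq : θ * ξ ^ (((i : ℕ) : ℤ) - 1) * ((-1 : k) ^ (i : ℕ) - ξ ^ (j : ℕ)) ≠ 0 :=
    mul_ne_zero
      (mul_ne_zero (hξ.ne_zero_of_sq_eq_two_mul hθ) (zpow_ne_zero _ (hξ.ne_zero four_ne_zero)))
      (sub_ne_zero.2 (hξ.neg_one_pow_ne_pow_of_not_modEq j.isLt hij))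
  obtain ⟨-, hb, -, hx⟩ := hρ
  have hbW : ∀ v ∈ W, Mb k *ᵥ v ∈ W := fun v hv => hb ▸ hW _ v hv
  have hxW : ∀ v ∈ W, Mx k ξ θ i j *ᵥ v ∈ W := fun v hv => hx ▸ hW _ v hv
  exact eq_bot_or_eq_top_of_mulVec_mem hq W hbW hxW

theorem IsRepV.eq_of_intertwined (hξ : IsPrimitiveRoot ξ 4) {i j i' j' : Fin 4}
    {ρ ρ' : DAlg k ξ θ →ₐ[k] Matrix (Fin 2) (Fin 2) k} (hρ : IsRepV k ξ θ i j ρ)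
    (hρ' : IsRepV k ξ θ i' j' ρ') {P : Matrix (Fin 2) (Fin 2) k} (hP : IsUnit P)
    (hPρ : ∀ d : DAlg k ξ θ, ρ' d * P = P * ρ d) : (i, j) = (i', j') := by
  have hb := hPρ (bD k ξ θ)
  have ha := hPρ (aD k ξ θ)
  have hg := hPρ (gD k ξ θ)
  rw [hρ.2.1, hρ'.2.1] at hb
  rw [hρ.1, hρ'.1] at ha
  rw [hρ.2.2.1, hρ'.2.2.1] at hg
  have hP00 := apply_zero_zero_ne_zero_of_commute_nilpotent hP hb
  have hi := eq_of_diagonal_mul_eq_mul_diagonal hP00 ha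
  have hj := eq_of_diagonal_mul_eq_mul_diagonal hP00 hg
  rw [Fin.val_injective (hξ.pow_inj i.isLt i'.isLt hi.symm),
    Fin.val_injective (hξ.pow_inj j.isLt j'.isLt hj.symm)]

end Representation

theorem stmt_8_general (k : Type) [Field k] (ξ θ : k)
    (hξ : IsPrimitiveRoot ξ 4) (hθ : θ ^ 2 = 2 * ξ) :
    (∀ i j : Fin 4, ¬(2 * (i : ℕ)) ≡ (j : ℕ) [MOD 4] →
      ∃ ρ : DAlg k ξ θ →ₐ[k] Matrix (Fin 2) (Fin 2) k, IsRepV k ξ θ i j ρ) ∧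
    (∀ i j : Fin 4, ¬(2 * (i : ℕ)) ≡ (j : ℕ) [MOD 4] →
      ∀ ρ : DAlg k ξ θ →ₐ[k] Matrix (Fin 2) (Fin 2) k, IsRepV k ξ θ i j ρ →
        ∀ W : Submodule k (Fin 2 → k),
          (∀ (d : DAlg k ξ θ), ∀ v ∈ W, (ρ d).mulVec v ∈ W) → W = ⊥ ∨ W = ⊤) ∧
    (∀ i j i' j' : Fin 4, ¬(2 * (i : ℕ)) ≡ (j : ℕ) [MOD 4] →
      ¬(2 * (i' : ℕ)) ≡ (j' : ℕ) [MOD 4] →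
      ∀ ρ ρ' : DAlg k ξ θ →ₐ[k] Matrix (Fin 2) (Fin 2) k,
        IsRepV k ξ θ i j ρ → IsRepV k ξ θ i' j' ρ' →
        (∃ P : Matrix (Fin 2) (Fin 2) k, IsUnit P ∧ ∀ d : DAlg k ξ θ,
          ρ' d * P = P * ρ d) →
        (i, j) = (i', j')) :=
  ⟨fun i j _ => exists_isRepV hξ hθ i j,
    fun _ _ hij _ hρ W hW => hρ.eq_bot_or_eq_top hξ hθ hij W hW,
    fun _ _ _ _ _ _ _ _ hρ hρ' ⟨_, hP, hPρ⟩ => hρ.eq_of_intertwined hξ hρ' hP hPρ⟩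

/-- For `(i,j) ∈ Λ`, the given matrices define a left `D`-module structure `V_{i,j}`
on `k²` (i.e. the assignment extends to an algebra map `D → M₂(k)`); each `V_{i,j}`
is simple (it has no nontrivial invariant subspace), and `V_{i,j} ≅ V_{k,l}` as
`D`-modules (i.e. there is an invertible intertwiner) implies `(i,j) = (k,l)`. -/
theorem stmt_8 (k : Type) [Field k] [IsAlgClosed k] [CharZero k] (ξ θ : k)
    (hξ : IsPrimitiveRoot ξ 4) (hθ : θ ^ 2 = 2 * ξ) :
    (∀ i j : Fin 4, ¬(2 * (i : ℕ)) ≡ (j : ℕ) [MOD 4] →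
      ∃ ρ : DAlg k ξ θ →ₐ[k] Matrix (Fin 2) (Fin 2) k, IsRepV k ξ θ i j ρ) ∧
    (∀ i j : Fin 4, ¬(2 * (i : ℕ)) ≡ (j : ℕ) [MOD 4] →
      ∀ ρ : DAlg k ξ θ →ₐ[k] Matrix (Fin 2) (Fin 2) k, IsRepV k ξ θ i j ρ →
        ∀ W : Submodule k (Fin 2 → k),
          (∀ (d : DAlg k ξ θ), ∀ v ∈ W, (ρ d).mulVec v ∈ W) → W = ⊥ ∨ W = ⊤) ∧
    (∀ i j i' j' : Fin 4, ¬(2 * (i : ℕ)) ≡ (j : ℕ) [MOD 4] →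
      ¬(2 * (i' : ℕ)) ≡ (j' : ℕ) [MOD 4] →
      ∀ ρ ρ' : DAlg k ξ θ →ₐ[k] Matrix (Fin 2) (Fin 2) k,
        IsRepV k ξ θ i j ρ → IsRepV k ξ θ i' j' ρ' →
        (∃ P : Matrix (Fin 2) (Fin 2) k, IsUnit P ∧ ∀ d : DAlg k ξ θ,
          ρ' d * P = P * ρ d) →
        (i, j) = (i', j')) :=
  stmt_8_general k ξ θ hξ hθ

end
end
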